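/- arXiv:2307.12007 — 4 statements merged into one kernel-verified Lean document; each statement's English description precedes it below -/
import Mathlib

section
/- A subgroup Y of the restricted direct product G = ∏'_ν G_ν has compact closure in G if and only if there exists a family (K_ν)_ν with each K_ν a compact subset of G_ν and K_ν = H_ν for all but finitely many ν such that Y ⊆ ∏_ν K_ν. -/
/-!
A compact set is covered by finitely many translates of a neighbourhood of `1` of the form
`∏ D_ν`, with `D_ν` compact and `D_ν = H_ν` for almost all `ν`, and a finite union of translates
of such boxes lies in a box of the same kind. Conversely, if `K_ν` is compact and `K_ν ⊆ H_ν`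
for almost all `ν`, the box `∏ K_ν` is the continuous image of the Tychonoff product: a basic
neighbourhood only constrains finitely many coordinates beyond `H_ν`. In a topological group a
subset of a compact set has compact closure.
-/

open Filter Topology Pointwise

/-- The restricted direct product of the groups `G ν` with respect to the
subgroups `H ν`, as a subgroup of the full direct product. -/
def restrictedSubgroup {I : Type*} (G : I → Type*) [∀ ν, Group (G ν)]
    (H : ∀ ν, Subgroup (G ν)) : Subgroup (∀ ν, G ν) where
  carrier := {x | ∀ᶠ ν in Filter.cofinite, x ν ∈ H ν}
  one_mem' := by
    simp only [Set.mem_setOf_eq]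
    exact Filter.Eventually.of_forall fun ν => (H ν).one_mem
  mul_mem' := fun {a b} hx hy => by
    simp only [Set.mem_setOf_eq] at hx hy ⊢
    filter_upwards [hx, hy] with ν h1 h2 using (H ν).mul_mem h1 h2
  inv_mem' := fun {a} hx => by
    simp only [Set.mem_setOf_eq] at hx ⊢
    filter_upwards [hx] with ν h using (H ν).inv_mem h

/-- The restricted direct product, as a type. -/
def RestrictedProduct' {I : Type*} (G : I → Type*) [∀ ν, Group (G ν)]
    (H : ∀ ν, Subgroup (G ν)) : Type _ :=
  ↥(restrictedSubgroup G H)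

instance {I : Type*} (G : I → Type*) [∀ ν, Group (G ν)] (H : ∀ ν, Subgroup (G ν)) :
    Group (RestrictedProduct' G H) :=
  inferInstanceAs (Group ↥(restrictedSubgroup G H))

/-- The underlying family of an element of the restricted direct product. -/
def RestrictedProduct'.toPi {I : Type*} {G : I → Type*} [∀ ν, Group (G ν)]
    {H : ∀ ν, Subgroup (G ν)} (x : RestrictedProduct' G H) : ∀ ν, G ν :=
  x.1

namespace RestrictedProduct'

variable {I : Type*} {G : I → Type*} [∀ ν, Group (G ν)] {H : ∀ ν, Subgroup (G ν)}

def mk (x : ∀ ν, G ν) (hx : ∀ᶠ ν in cofinite, x ν ∈ H ν) : RestrictedProduct' G H :=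
  ⟨x, hx⟩

lemma eventually_toPi_mem (x : RestrictedProduct' G H) : ∀ᶠ ν in cofinite, x.toPi ν ∈ H ν :=
  x.2

@[simp]
lemma toPi_mul (x y : RestrictedProduct' G H) : (x * y).toPi = x.toPi * y.toPi :=
  rfl

@[simp]
lemma toPi_inv (x : RestrictedProduct' G H) : x⁻¹.toPi = x.toPi⁻¹ :=
  rfl

def box (K : ∀ ν, Set (G ν)) : Set (RestrictedProduct' G H) :=
  {x | ∀ ν, x.toPi ν ∈ K ν}

lemma smul_box_subset (x : RestrictedProduct' G H) (K : ∀ ν, Set (G ν)) :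
    x • (box K : Set (RestrictedProduct' G H)) ⊆ box fun ν => x.toPi ν • K ν := by
  rintro _ ⟨y, hy, rfl⟩ ν
  exact Set.smul_mem_smul_set (hy ν)

variable [∀ ν, TopologicalSpace (G ν)]

variable (H) in
def IsRestrictedCompactFamily (K : ∀ ν, Set (G ν)) : Prop :=
  (∀ ν, IsCompact (K ν)) ∧ ∀ᶠ ν in cofinite, K ν = (H ν : Set (G ν))

lemma IsRestrictedCompactFamily.smul [∀ ν, ContinuousMul (G ν)] {K : ∀ ν, Set (G ν)}
    (hK : IsRestrictedCompactFamily H K) (x : RestrictedProduct' G H) :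
    IsRestrictedCompactFamily H fun ν => x.toPi ν • K ν := by
  refine ⟨fun ν => (hK.1 ν).smul _, ?_⟩
  filter_upwards [hK.2, x.eventually_toPi_mem] with ν hKν hxν
  rw [hKν, smul_coe_set hxν]

lemma IsRestrictedCompactFamily.biUnion {ι : Type*} {t : Finset ι} (ht : t.Nonempty)
    {K : ι → ∀ ν, Set (G ν)} (hK : ∀ i ∈ t, IsRestrictedCompactFamily H (K i)) :
    IsRestrictedCompactFamily H fun ν => ⋃ i ∈ t, K i ν := by
  refine ⟨fun ν => t.isCompact_biUnion fun i hi => (hK i hi).1 ν, ?_⟩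
  filter_upwards [(t.eventually_all (l := cofinite)).2 fun i hi => (hK i hi).2] with ν hν
  calc ⋃ i ∈ t, K i ν = ⋃ i ∈ t, (H ν : Set (G ν)) := Set.iUnion₂_congr hν
    _ = H ν := Set.biUnion_const (s := (t : Set ι)) (Finset.coe_nonempty.2 ht) _

variable [TopologicalSpace (RestrictedProduct' G H)]

variable (H) in
def HasRestrictedNhdsBasis : Prop :=
  (𝓝 (1 : RestrictedProduct' G H)).HasBasis
    (fun N : ∀ ν, Set (G ν) =>
      (∀ ν, IsOpen (N ν) ∧ (1 : G ν) ∈ N ν) ∧ ∀ᶠ ν in cofinite, N ν = (H ν : Set (G ν)))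
    box

lemma exists_isRestrictedCompactFamily_box_mem_nhds_one [∀ ν, WeaklyLocallyCompactSpace (G ν)]
    {Iinf : Set I} (hIinf : Iinf.Finite) (hHcompact : ∀ ν ∉ Iinf, IsCompact (H ν : Set (G ν)))
    (hHopen : ∀ ν ∉ Iinf, IsOpen (H ν : Set (G ν))) (hbasis : HasRestrictedNhdsBasis H) :
    ∃ D, IsRestrictedCompactFamily H D ∧ box D ∈ 𝓝 (1 : RestrictedProduct' G H) := by
  classical
  choose C hCcompact hCnhds using fun ν => exists_compact_mem_nhds (1 : G ν)
  let N : ∀ ν, Set (G ν) := fun ν => if ν ∈ Iinf then interior (C ν) else H ν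
  let D : ∀ ν, Set (G ν) := fun ν => if ν ∈ Iinf then C ν else H ν
  have hN : box N ∈ 𝓝 (1 : RestrictedProduct' G H) := by
    refine hbasis.mem_of_mem ⟨fun ν => ?_, ?_⟩
    · by_cases hν : ν ∈ Iinf
      · simp only [N, if_pos hν]
        exact ⟨isOpen_interior, mem_interior_iff_mem_nhds.2 (hCnhds ν)⟩
      · simp only [N, if_neg hν]
        exact ⟨hHopen ν hν, (H ν).one_mem⟩
    · filter_upwards [hIinf.eventually_cofinite_notMem] with ν hν
      simp [N, hν]
  refine ⟨D, ⟨fun ν => ?_, ?_⟩, mem_of_superset hN fun x hx ν => ?_⟩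
  · by_cases hν : ν ∈ Iinf
    · simpa [D, hν] using hCcompact ν
    · simpa [D, hν] using hHcompact ν hν
  · filter_upwards [hIinf.eventually_cofinite_notMem] with ν hν
    simp [D, hν]
  · by_cases hν : ν ∈ Iinf
    · simpa [D, hν] using interior_subset (by simpa [N, hν] using hx ν)
    · simpa [N, D, hν] using hx ν

lemma _root_.IsCompact.exists_subset_box [∀ ν, ContinuousMul (G ν)]
    [IsTopologicalGroup (RestrictedProduct' G H)] {D : ∀ ν, Set (G ν)}
    (hD : IsRestrictedCompactFamily H D) (hD1 : box D ∈ 𝓝 (1 : RestrictedProduct' G H))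
    {C : Set (RestrictedProduct' G H)} (hC : IsCompact C) :
    ∃ K, IsRestrictedCompactFamily H K ∧ C ⊆ box K := by
  classical
  obtain ⟨t, -, hCt⟩ := hC.elim_nhds_subcover (fun x => x • box D)
    fun _ _ => smul_mem_nhds_self.2 hD1
  -- `1` is inserted so that the union is nonempty, hence equals `H ν` for almost all `ν`.
  refine ⟨fun ν => ⋃ x ∈ insert 1 t, x.toPi ν • D ν,
    IsRestrictedCompactFamily.biUnion (Finset.insert_nonempty _ _) fun x _ => hD.smul x,
    fun y hy ν => ?_⟩
  obtain ⟨x, hx, hyx⟩ := Set.mem_iUnion₂.1 (hCt hy)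
  exact Set.mem_iUnion₂.2 ⟨x, Finset.mem_insert_of_mem hx, smul_box_subset x D hyx ν⟩

lemma continuous_of_continuous_toPi [∀ ν, ContinuousMul (G ν)]
    [IsTopologicalGroup (RestrictedProduct' G H)] (hbasis : HasRestrictedNhdsBasis H)
    {X : Type*} [TopologicalSpace X] {f : X → RestrictedProduct' G H}
    (hf : ∀ ν, Continuous fun x => (f x).toPi ν)
    (hfH : ∀ᶠ ν in cofinite, ∀ x, (f x).toPi ν ∈ H ν) : Continuous f := by
  refine continuous_iff_continuousAt.2 fun x₀ => ?_
  rw [ContinuousAt, ← map_mul_left_nhds_one (f x₀), (hbasis.map _).tendsto_right_iff]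
  rintro N ⟨hNopen, hNH⟩
  set S := {ν | ¬(N ν = H ν ∧ ∀ x, (f x).toPi ν ∈ H ν)}
  have hS : S.Finite := hNH.and hfH
  have hnear : ∀ᶠ x in 𝓝 x₀, ∀ ν ∈ S, ((f x₀).toPi ν)⁻¹ * (f x).toPi ν ∈ N ν :=
    hS.eventually_all.2 fun ν _ =>
      ((hNopen ν).1.preimage ((continuous_const_mul _).comp (hf ν))).mem_nhds
        (by simpa using (hNopen ν).2)
  filter_upwards [hnear] with x hx
  refine ⟨(f x₀)⁻¹ * f x, fun ν => ?_, mul_inv_cancel_left _ _⟩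
  by_cases hν : ν ∈ S
  · exact hx ν hν
  · obtain ⟨hN, hH⟩ := not_not.1 hν
    simpa [hN] using (H ν).mul_mem ((H ν).inv_mem (hH x₀)) (hH x)

lemma isCompact_box [∀ ν, ContinuousMul (G ν)] [IsTopologicalGroup (RestrictedProduct' G H)]
    (hbasis : HasRestrictedNhdsBasis H) {K : ∀ ν, Set (G ν)} (hK : ∀ ν, IsCompact (K ν))
    (hKH : ∀ᶠ ν in cofinite, K ν ⊆ H ν) : IsCompact (box K : Set (RestrictedProduct' G H)) := by
  have hmem : ∀ᶠ ν in cofinite, ∀ x : Set.univ.pi K, x.1 ν ∈ H ν :=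
    hKH.mono fun ν hν x => hν (x.2 ν trivial)
  let f : Set.univ.pi K → RestrictedProduct' G H := fun x =>
    mk x.1 (hmem.mono fun ν hν => hν x)
  have hf : Continuous f :=
    continuous_of_continuous_toPi hbasis (fun ν => (continuous_apply ν).comp continuous_subtype_val)
      hmem
  have hrange : Set.range f = box K := by
    ext y
    exact ⟨by rintro ⟨x, rfl⟩ ν; exact x.2 ν trivial, fun hy => ⟨⟨y.toPi, fun ν _ => hy ν⟩, rfl⟩⟩
  have := isCompact_iff_compactSpace.1 (isCompact_univ_pi hK)
  exact hrange ▸ isCompact_range hf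

end RestrictedProduct'

open RestrictedProduct'

theorem restrictedProduct_subgroup_compactClosure_iff_general {I : Type*} (Iinf : Set I)
    (hIinf : Iinf.Finite)
    (G : I → Type*) [∀ ν, Group (G ν)] [∀ ν, TopologicalSpace (G ν)]
    [∀ ν, IsTopologicalGroup (G ν)] [∀ ν, LocallyCompactSpace (G ν)]
    (H : ∀ ν, Subgroup (G ν))
    (hHcompact : ∀ ν ∉ Iinf, IsCompact (H ν : Set (G ν)))
    (hHopen : ∀ ν ∉ Iinf, IsOpen (H ν : Set (G ν)))
    [TopologicalSpace (RestrictedProduct' G H)]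
    [IsTopologicalGroup (RestrictedProduct' G H)]
    (hbasis : (nhds (1 : RestrictedProduct' G H)).HasBasis
      (fun N : ∀ ν, Set (G ν) =>
        (∀ ν, IsOpen (N ν) ∧ (1 : G ν) ∈ N ν) ∧
          ∀ᶠ ν in Filter.cofinite, N ν = (H ν : Set (G ν)))
      (fun N => {x : RestrictedProduct' G H | ∀ ν, x.toPi ν ∈ N ν}))
    (Y : Subgroup (RestrictedProduct' G H)) :
    IsCompact (closure (Y : Set (RestrictedProduct' G H))) ↔
      ∃ K : ∀ ν, Set (G ν), (∀ ν, IsCompact (K ν)) ∧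
        (∀ᶠ ν in Filter.cofinite, K ν = (H ν : Set (G ν))) ∧
        ∀ y ∈ Y, ∀ ν, y.toPi ν ∈ K ν := by
  constructor
  · intro hY
    obtain ⟨D, hD, hD1⟩ :=
      exists_isRestrictedCompactFamily_box_mem_nhds_one hIinf hHcompact hHopen hbasis
    obtain ⟨K, ⟨hKcompact, hKH⟩, hYK⟩ := hY.exists_subset_box hD hD1
    exact ⟨K, hKcompact, hKH, fun y hy => hYK (subset_closure hy)⟩
  · rintro ⟨K, hKcompact, hKH, hYK⟩
    exact (isCompact_box hbasis hKcompact (hKH.mono fun _ h => h.subset)).closure_of_subset hYK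

theorem restrictedProduct_subgroup_compactClosure_iff {I : Type*} (Iinf : Set I)
    (hIinf : Iinf.Finite)
    (G : I → Type*) [∀ ν, Group (G ν)] [∀ ν, TopologicalSpace (G ν)]
    [∀ ν, IsTopologicalGroup (G ν)] [∀ ν, LocallyCompactSpace (G ν)] [∀ ν, T2Space (G ν)]
    (H : ∀ ν, Subgroup (G ν))
    (hHcompact : ∀ ν ∉ Iinf, IsCompact (H ν : Set (G ν)))
    (hHopen : ∀ ν ∉ Iinf, IsOpen (H ν : Set (G ν)))
    [TopologicalSpace (RestrictedProduct' G H)]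
    [IsTopologicalGroup (RestrictedProduct' G H)]
    (hbasis : (nhds (1 : RestrictedProduct' G H)).HasBasis
      (fun N : ∀ ν, Set (G ν) =>
        (∀ ν, IsOpen (N ν) ∧ (1 : G ν) ∈ N ν) ∧
          ∀ᶠ ν in Filter.cofinite, N ν = (H ν : Set (G ν)))
      (fun N => {x : RestrictedProduct' G H | ∀ ν, x.toPi ν ∈ N ν}))
    (Y : Subgroup (RestrictedProduct' G H)) :
    IsCompact (closure (Y : Set (RestrictedProduct' G H))) ↔
      ∃ K : ∀ ν, Set (G ν), (∀ ν, IsCompact (K ν)) ∧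
        (∀ᶠ ν in Filter.cofinite, K ν = (H ν : Set (G ν))) ∧
        ∀ y ∈ Y, ∀ ν, y.toPi ν ∈ K ν :=
  restrictedProduct_subgroup_compactClosure_iff_general Iinf hIinf G H hHcompact hHopen hbasis Y
end

section
/- Let χ : G → ℂ^× be a continuous group homomorphism on the restricted direct product G = ∏'_ν G_ν. Then χ is trivial on H_ν for all but finitely many ν, and for every y = (y_ν)_ν ∈ G one has χ(y) = ∏_ν χ_ν(y_ν), where χ_ν denotes the restriction of χ to G_ν (embedded into G as the ν-th coordinate, with identity entries elsewhere) and all but finitely many factors of the product equal 1. -/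
/-!
`ℂˣ` has no small subgroups: if `‖w - 1‖ < 1/2` then `‖w² - 1‖ = ‖w - 1‖ ‖w + 1‖ ≥ 3/2 ‖w - 1‖`,
so for `w ≠ 1` some `w ^ 2 ^ k` leaves the ball of radius `1/2` about `1`. By continuity `χ` maps a
basic box `∏ N_ν`, with `N_ν = H_ν` off a finite set `S`, into that ball. The box contains the
subgroup of elements that are trivial on `S` and lie in `H_ν` off `S`, so `χ` kills that subgroup.
Every `y` is the product of its truncation to a finite set `T ⊇ S` (off which `y_ν ∈ H_ν`) with an
element of that subgroup, and `χ` of the truncation is the finite product of the `χ_ν(y_ν)`.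
-/

open Filter Topology

/-- The restricted direct product, as a type. -/
def RestrictedGroupProduct {I : Type*} (G : I → Type*) [∀ ν, Group (G ν)]
    (H : ∀ ν, Subgroup (G ν)) : Type _ :=
  ↥(restrictedSubgroup G H)

instance {I : Type*} (G : I → Type*) [∀ ν, Group (G ν)] (H : ∀ ν, Subgroup (G ν)) :
    Group (RestrictedGroupProduct G H) :=
  inferInstanceAs (Group ↥(restrictedSubgroup G H))

/-- The underlying family of an element of the restricted direct product. -/
def RestrictedGroupProduct.toPi {I : Type*} {G : I → Type*} [∀ ν, Group (G ν)]
    {H : ∀ ν, Subgroup (G ν)} (x : RestrictedGroupProduct G H) : ∀ ν, G ν :=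
  x.1

/-- The embedding of `G ν` into the restricted direct product as the `ν`-th coordinate,
with identity entries elsewhere. -/
def RestrictedGroupProduct.single {I : Type*} [DecidableEq I] {G : I → Type*} [∀ ν, Group (G ν)]
    {H : ∀ ν, Subgroup (G ν)} (ν : I) (g : G ν) : RestrictedGroupProduct G H :=
  ⟨Pi.mulSingle ν g, by
    show ∀ᶠ μ in Filter.cofinite, Pi.mulSingle ν g μ ∈ H μ
    refine Filter.eventually_cofinite.2 (Set.Finite.subset (Set.finite_singleton ν) ?_)
    intro μ hμ
    by_contra hμν
    exact hμ (by rw [Pi.mulSingle_eq_of_ne (by simpa using hμν)]; exact (H μ).one_mem)⟩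

namespace RCLike

variable {𝕜 : Type*} [RCLike 𝕜]

theorem mul_norm_sub_one_le_norm_sq_sub_one {w : 𝕜} (hw : ‖w - 1‖ < 1 / 2) :
    3 / 2 * ‖w - 1‖ ≤ ‖w ^ 2 - 1‖ := by
  have hsum : 3 / 2 ≤ ‖w - 1 + 2‖ := by
    have := norm_sub_norm_le (2 : 𝕜) (-(w - 1))
    rw [norm_two, norm_neg, sub_neg_eq_add, add_comm] at this
    linarith
  calc 3 / 2 * ‖w - 1‖ ≤ ‖w - 1 + 2‖ * ‖w - 1‖ := by gcongr
    _ = ‖w ^ 2 - 1‖ := by rw [← norm_mul]; ring_nf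

theorem eq_one_of_forall_norm_pow_sub_one_lt {w : 𝕜} (hw : ∀ n : ℕ, ‖w ^ n - 1‖ < 1 / 2) :
    w = 1 := by
  have hgrowth : ∀ k : ℕ, (3 / 2 : ℝ) ^ k * ‖w - 1‖ ≤ ‖w ^ 2 ^ k - 1‖ := by
    intro k
    induction k with
    | zero => simp
    | succ k ih =>
      calc (3 / 2 : ℝ) ^ (k + 1) * ‖w - 1‖ = 3 / 2 * ((3 / 2) ^ k * ‖w - 1‖) := by ring
        _ ≤ 3 / 2 * ‖w ^ 2 ^ k - 1‖ := by gcongr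
        _ ≤ ‖(w ^ 2 ^ k) ^ 2 - 1‖ := mul_norm_sub_one_le_norm_sq_sub_one (hw _)
        _ = ‖w ^ 2 ^ (k + 1) - 1‖ := by rw [← pow_mul, pow_succ]
  by_contra hne
  have hpos : 0 < ‖w - 1‖ := norm_pos_iff.2 (sub_ne_zero.2 hne)
  obtain ⟨k, hk⟩ := pow_unbounded_of_one_lt (1 / 2 / ‖w - 1‖) (by norm_num : (1 : ℝ) < 3 / 2)
  rw [div_lt_iff₀ hpos] at hk
  linarith [hgrowth k, hw (2 ^ k)]

end RCLike

theorem Units.eq_one_of_forall_norm_pow_sub_one_lt {u : ℂˣ}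
    (hu : ∀ n : ℕ, ‖((u ^ n : ℂˣ) : ℂ) - 1‖ < 1 / 2) : u = 1 :=
  Units.ext <| RCLike.eq_one_of_forall_norm_pow_sub_one_lt fun n => by
    simpa only [Units.val_pow_eq_pow_val] using hu n

theorem MonoidHom.exists_mem_nhds_one_forall_pow_mem_map_eq_one {M : Type*} [Monoid M]
    [TopologicalSpace M] (χ : M →* ℂˣ) (hχ : ContinuousAt χ 1) :
    ∃ V ∈ 𝓝 (1 : M), ∀ x, (∀ n : ℕ, x ^ n ∈ V) → χ x = 1 := by
  have hball : Units.val ⁻¹' Metric.ball (1 : ℂ) (1 / 2) ∈ 𝓝 (χ 1) := by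
    rw [map_one]
    exact (Metric.isOpen_ball.preimage Units.continuous_val).mem_nhds (by simp)
  refine ⟨_, hχ hball, fun x hx => Units.eq_one_of_forall_norm_pow_sub_one_lt fun n => ?_⟩
  simpa only [map_pow, Set.mem_preimage, Metric.mem_ball, dist_eq_norm] using hx n

namespace RestrictedGroupProduct

variable {I : Type*} {G : I → Type*} [∀ ν, Group (G ν)] {H : ∀ ν, Subgroup (G ν)}

theorem toPi_injective : Function.Injective (toPi : RestrictedGroupProduct G H → ∀ ν, G ν) :=
  Subtype.val_injective

@[simp] theorem toPi_one : (1 : RestrictedGroupProduct G H).toPi = 1 := rfl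

@[simp] theorem toPi_mul (x y : RestrictedGroupProduct G H) : (x * y).toPi = x.toPi * y.toPi := rfl

@[simp] theorem toPi_inv (x : RestrictedGroupProduct G H) : x⁻¹.toPi = x.toPi⁻¹ := rfl

@[simp] theorem toPi_pow (x : RestrictedGroupProduct G H) (n : ℕ) : (x ^ n).toPi = x.toPi ^ n :=
  rfl

theorem eventually_toPi_mem (x : RestrictedGroupProduct G H) :
    ∀ᶠ ν in cofinite, x.toPi ν ∈ H ν :=
  x.2

section Truncate

variable [DecidableEq I]

@[simp] theorem toPi_single (ν : I) (g : G ν) :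
    (single ν g : RestrictedGroupProduct G H).toPi = Pi.mulSingle ν g := rfl

def truncate (T : Finset I) (x : RestrictedGroupProduct G H) : RestrictedGroupProduct G H :=
  ⟨fun ν => if ν ∈ T then x.toPi ν else 1, by
    filter_upwards [x.eventually_toPi_mem] with ν hν
    split_ifs
    exacts [hν, (H ν).one_mem]⟩

theorem toPi_truncate (T : Finset I) (x : RestrictedGroupProduct G H) (ν : I) :
    (x.truncate T).toPi ν = if ν ∈ T then x.toPi ν else 1 := rfl

theorem truncate_empty (x : RestrictedGroupProduct G H) : x.truncate ∅ = 1 :=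
  toPi_injective <| funext fun ν => by simp [toPi_truncate]

theorem truncate_insert {T : Finset I} {a : I} (ha : a ∉ T) (x : RestrictedGroupProduct G H) :
    x.truncate (insert a T) = single a (x.toPi a) * x.truncate T := by
  refine toPi_injective <| funext fun ν => ?_
  rcases eq_or_ne ν a with rfl | hν
  · simp [toPi_truncate, ha]
  · simp [toPi_truncate, hν]

theorem map_truncate {M : Type*} [CommMonoid M] (χ : RestrictedGroupProduct G H →* M)
    (T : Finset I) (x : RestrictedGroupProduct G H) :
    χ (x.truncate T) = ∏ ν ∈ T, χ (single ν (x.toPi ν)) := by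
  induction T using Finset.induction_on with
  | empty => rw [truncate_empty, map_one, Finset.prod_empty]
  | insert a T ha ih => rw [truncate_insert ha, map_mul, ih, Finset.prod_insert ha]

end Truncate

theorem exists_finset_forall_map_eq_one
    [TopologicalSpace (RestrictedGroupProduct G H)]
    (hbox : ∀ V ∈ 𝓝 (1 : RestrictedGroupProduct G H), ∃ N : ∀ ν, Set (G ν),
      (∀ ν, 1 ∈ N ν) ∧ (∀ᶠ ν in cofinite, N ν = H ν) ∧ {x | ∀ ν, x.toPi ν ∈ N ν} ⊆ V)
    (χ : RestrictedGroupProduct G H →* ℂˣ) (hχ : ContinuousAt χ 1) :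
    ∃ S : Finset I, ∀ x : RestrictedGroupProduct G H,
      (∀ ν, x.toPi ν ∈ H ν ∧ (ν ∈ S → x.toPi ν = 1)) → χ x = 1 := by
  obtain ⟨V, hV, hχV⟩ := χ.exists_mem_nhds_one_forall_pow_mem_map_eq_one hχ
  obtain ⟨N, hN1, hNH, hNV⟩ := hbox V hV
  set S := (eventually_cofinite.1 hNH).toFinset
  refine ⟨S, fun x hx => hχV x fun n => hNV fun ν => ?_⟩
  by_cases hν : ν ∈ S
  · simpa [(hx ν).2 hν] using hN1 ν
  · have hNν : N ν = H ν := by simpa [S] using hν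
    simpa [hNν] using (H ν).pow_mem (hx ν).1 n

end RestrictedGroupProduct

theorem character_of_restrictedProduct_general {I : Type*} [DecidableEq I]
    (G : I → Type*) [∀ ν, Group (G ν)] [∀ ν, TopologicalSpace (G ν)]
    (H : ∀ ν, Subgroup (G ν))
    [TopologicalSpace (RestrictedGroupProduct G H)]
    (hbasis : (nhds (1 : RestrictedGroupProduct G H)).HasBasis
      (fun N : ∀ ν, Set (G ν) =>
        (∀ ν, IsOpen (N ν) ∧ (1 : G ν) ∈ N ν) ∧
          ∀ᶠ ν in Filter.cofinite, N ν = (H ν : Set (G ν)))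
      (fun N => {x : RestrictedGroupProduct G H | ∀ ν, x.toPi ν ∈ N ν}))
    (χ : RestrictedGroupProduct G H →* ℂˣ) (hχ : Continuous χ) :
    (∀ᶠ ν in Filter.cofinite, ∀ h ∈ H ν, χ (RestrictedGroupProduct.single ν h) = 1) ∧
      ∀ y : RestrictedGroupProduct G H,
        (∀ᶠ ν in Filter.cofinite, χ (RestrictedGroupProduct.single ν (y.toPi ν)) = 1) ∧
        χ y = ∏ᶠ ν, χ (RestrictedGroupProduct.single ν (y.toPi ν)) := by
  open RestrictedGroupProduct in
  obtain ⟨S, hS⟩ := exists_finset_forall_map_eq_one (fun V hV => by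
      obtain ⟨N, ⟨hN, hNH⟩, hNV⟩ := hbasis.mem_iff.1 hV
      exact ⟨N, fun ν => (hN ν).2, hNH, hNV⟩) χ hχ.continuousAt
  have hsingle : ∀ ν ∉ S, ∀ h ∈ H ν, χ (single ν h) = 1 := fun ν hν h hh =>
    hS (single ν h) fun μ => by
      rcases eq_or_ne μ ν with rfl | hμ
      · simp [hh, hν]
      · simp [hμ]
  refine ⟨S.eventually_cofinite_notMem.mono hsingle, fun y => ?_⟩
  set T := S ∪ (eventually_cofinite.1 y.eventually_toPi_mem).toFinset
  have hT : ∀ ν ∉ T, ν ∉ S ∧ y.toPi ν ∈ H ν := fun ν hν => by simpa [T] using hν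
  have hfactor : ∀ ν ∉ T, χ (single ν (y.toPi ν)) = 1 := fun ν hν =>
    hsingle ν (hT ν hν).1 _ (hT ν hν).2
  have hrest : χ ((y.truncate T)⁻¹ * y) = 1 := hS _ fun ν => by
    by_cases hν : ν ∈ T
    · simp [toPi_truncate, hν]
    · simp [toPi_truncate, hν, hT ν hν]
  refine ⟨T.eventually_cofinite_notMem.mono hfactor, ?_⟩
  calc χ y = χ (y.truncate T * ((y.truncate T)⁻¹ * y)) := by rw [mul_inv_cancel_left]
    _ = ∏ ν ∈ T, χ (single ν (y.toPi ν)) := by rw [map_mul, hrest, mul_one, map_truncate]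
    _ = ∏ᶠ ν, χ (single ν (y.toPi ν)) :=
      (finprod_eq_prod_of_mulSupport_subset _ fun ν hν => not_not.1 (mt (hfactor ν) hν)).symm

theorem character_of_restrictedProduct {I : Type*} [DecidableEq I] (Iinf : Set I)
    (hIinf : Iinf.Finite)
    (G : I → Type*) [∀ ν, Group (G ν)] [∀ ν, TopologicalSpace (G ν)]
    [∀ ν, IsTopologicalGroup (G ν)] [∀ ν, LocallyCompactSpace (G ν)] [∀ ν, T2Space (G ν)]
    (H : ∀ ν, Subgroup (G ν))
    (hHcompact : ∀ ν ∉ Iinf, IsCompact (H ν : Set (G ν)))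
    (hHopen : ∀ ν ∉ Iinf, IsOpen (H ν : Set (G ν)))
    [TopologicalSpace (RestrictedGroupProduct G H)]
    [IsTopologicalGroup (RestrictedGroupProduct G H)]
    (hbasis : (nhds (1 : RestrictedGroupProduct G H)).HasBasis
      (fun N : ∀ ν, Set (G ν) =>
        (∀ ν, IsOpen (N ν) ∧ (1 : G ν) ∈ N ν) ∧
          ∀ᶠ ν in Filter.cofinite, N ν = (H ν : Set (G ν)))
      (fun N => {x : RestrictedGroupProduct G H | ∀ ν, x.toPi ν ∈ N ν}))
    (χ : RestrictedGroupProduct G H →* ℂˣ) (hχ : Continuous χ) :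
    (∀ᶠ ν in Filter.cofinite, ∀ h ∈ H ν, χ (RestrictedGroupProduct.single ν h) = 1) ∧
      ∀ y : RestrictedGroupProduct G H,
        (∀ᶠ ν in Filter.cofinite, χ (RestrictedGroupProduct.single ν (y.toPi ν)) = 1) ∧
        χ y = ∏ᶠ ν, χ (RestrictedGroupProduct.single ν (y.toPi ν)) :=
  character_of_restrictedProduct_general G H hbasis χ hχ
end

section
/- Assume each G_ν is abelian, and let dg = ∏_ν dg_ν be the induced Haar measure on G = ∏'_ν G_ν, where dg_ν(H_ν) = 1 for all ν outside a finite set S₀ ⊇ I∞. Let f_ν : G_ν → ℂ be continuous and integrable for each ν, with f_ν equal to the characteristic function of H_ν for all ν outside a finite set, and let f(g) = ∏_ν f_ν(g_ν) be the corresponding (integrable) function on G. Then for every continuous character χ of G of the form χ = ∏_ν χ_ν with each χ_ν a continuous unitary character of G_ν trivial on H_ν for all but finitely many ν, the Fourier transform of f factorizes: ∫_G f(g) χ̄(g) dg = ∏_ν ∫_{G_ν} f_ν(g_ν) χ̄_ν(g_ν) dg_ν, where all but finitely many factors equal 1. -/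
/-!
STATEMENT 7: Assume each `G_ν` is abelian, and let `dg = ∏_ν dg_ν` be the induced Haar
measure on `G = ∏'_ν G_ν`, where `dg_ν(H_ν) = 1` for all `ν` outside a finite set `S₀ ⊇ I∞`.
Let `f_ν : G_ν → ℂ` be continuous and integrable for each `ν`, with `f_ν` equal to the
characteristic function of `H_ν` for all `ν` outside a finite set, and let
`f(g) = ∏_ν f_ν(g_ν)` be the corresponding (integrable) function on `G`.  Then for every
continuous character `χ` of `G` of the form `χ = ∏_ν χ_ν`, with each `χ_ν` a continuous
unitary character of `G_ν` trivial on `H_ν` for all but finitely many `ν`, the Fourier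
transform of `f` factorizes:
`∫_G f(g) χ̄(g) dg = ∏_ν ∫_{G_ν} f_ν(g_ν) χ̄_ν(g_ν) dg_ν`,
where all but finitely many factors equal `1`.
-/

open Filter Topology

/-- The restricted direct product, as a type. -/
def RestrictedDirectProduct {I : Type*} (G : I → Type*) [∀ ν, Group (G ν)]
    (H : ∀ ν, Subgroup (G ν)) : Type _ :=
  ↥(restrictedSubgroup G H)

instance {I : Type*} (G : I → Type*) [∀ ν, Group (G ν)] (H : ∀ ν, Subgroup (G ν)) :
    Group (RestrictedDirectProduct G H) :=
  inferInstanceAs (Group ↥(restrictedSubgroup G H))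

/-- The underlying family of an element of the restricted direct product. -/
def RestrictedDirectProduct.toPi {I : Type*} {G : I → Type*} [∀ ν, Group (G ν)]
    {H : ∀ ν, Subgroup (G ν)} (x : RestrictedDirectProduct G H) : ∀ ν, G ν :=
  x.1

open MeasureTheory ComplexConjugate
open scoped ENNReal NNReal

theorem restrictedProduct_fourierTransform_eq_prod {I : Type*} (Iinf : Set I)
    (hIinf : Iinf.Finite)
    (G : I → Type*) [∀ ν, CommGroup (G ν)] [∀ ν, TopologicalSpace (G ν)]
    [∀ ν, IsTopologicalGroup (G ν)] [∀ ν, LocallyCompactSpace (G ν)] [∀ ν, T2Space (G ν)]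
    [∀ ν, MeasurableSpace (G ν)] [∀ ν, BorelSpace (G ν)]
    (H : ∀ ν, Subgroup (G ν))
    (hHcompact : ∀ ν ∉ Iinf, IsCompact (H ν : Set (G ν)))
    (hHopen : ∀ ν ∉ Iinf, IsOpen (H ν : Set (G ν)))
    [TopologicalSpace (RestrictedDirectProduct G H)]
    [IsTopologicalGroup (RestrictedDirectProduct G H)]
    (hbasis : (nhds (1 : RestrictedDirectProduct G H)).HasBasis
      (fun N : ∀ ν, Set (G ν) =>
        (∀ ν, IsOpen (N ν) ∧ (1 : G ν) ∈ N ν) ∧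
          ∀ᶠ ν in Filter.cofinite, N ν = (H ν : Set (G ν)))
      (fun N => {x : RestrictedDirectProduct G H | ∀ ν, x.toPi ν ∈ N ν}))
    [MeasurableSpace (RestrictedDirectProduct G H)] [BorelSpace (RestrictedDirectProduct G H)]
    -- the factor Haar measures, normalized outside a finite set `S₀ ⊇ I∞`
    (S₀ : Finset I) (hS₀ : Iinf ⊆ (S₀ : Set I))
    (μ : ∀ ν, Measure (G ν)) (hμ : ∀ ν, (μ ν).IsHaarMeasure)
    (hnorm : ∀ ν ∉ S₀, μ ν (H ν : Set (G ν)) = 1)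
    -- the induced Haar measure `dg` on `G`
    (μG : Measure (RestrictedDirectProduct G H)) (hμG : μG.IsHaarMeasure)
    (hμGprod : ∀ S : Finset I, S₀ ⊆ S →
      ∀ A : ∀ ν, Set (G ν), (∀ ν, MeasurableSet (A ν)) →
        (∀ ν ∉ S, A ν = (H ν : Set (G ν))) →
        μG {x : RestrictedDirectProduct G H | ∀ ν, x.toPi ν ∈ A ν} = ∏ ν ∈ S, μ ν (A ν))
    -- the local functions, almost all of them characteristic functions of the `H ν`
    (f : ∀ ν, G ν → ℂ) (hfcont : ∀ ν, Continuous (f ν))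
    (hfint : ∀ ν, Integrable (f ν) (μ ν))
    (hfchar : ∀ᶠ ν in Filter.cofinite,
      f ν = Set.indicator (H ν : Set (G ν)) (fun _ => (1 : ℂ)))
    -- the product function on `G`, assumed integrable
    (F : RestrictedDirectProduct G H → ℂ) (hF : ∀ g, F g = ∏ᶠ ν, f ν (g.toPi ν))
    (hFint : Integrable F μG)
    -- the local characters: continuous, unitary, and trivial on `H ν` for almost all `ν`
    (χl : ∀ ν, G ν →* ℂ) (hχcont : ∀ ν, Continuous (χl ν))
    (hχunit : ∀ ν, ∀ x : G ν, ‖χl ν x‖ = 1)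
    (hχtriv : ∀ᶠ ν in Filter.cofinite, ∀ h ∈ H ν, χl ν h = 1)
    -- the corresponding continuous character `χ = ∏_ν χ_ν` of `G`
    (χ : RestrictedDirectProduct G H → ℂ) (hχ : ∀ g, χ g = ∏ᶠ ν, χl ν (g.toPi ν))
    (hχGcont : Continuous χ) :
    (∀ᶠ ν in Filter.cofinite, ∫ x, f ν x * conj (χl ν x) ∂(μ ν) = 1) ∧
    ∫ g, F g * conj (χ g) ∂μG = ∏' ν, ∫ x, f ν x * conj (χl ν x) ∂(μ ν) := by
  classical
  -- Exceptional finite sets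
  have hfchar' : {ν | ¬ f ν = Set.indicator (H ν : Set (G ν)) fun _ => (1 : ℂ)}.Finite :=
    Filter.eventually_cofinite.mp hfchar
  have hχtriv' : {ν | ¬ ∀ h ∈ H ν, χl ν h = 1}.Finite := Filter.eventually_cofinite.mp hχtriv
  set T : Finset I := (S₀ ∪ hfchar'.toFinset) ∪ hχtriv'.toFinset with hTdef
  have hT0 : S₀ ⊆ T := fun ν hν => Finset.mem_union_left _ (Finset.mem_union_left _ hν)
  have hTIinf : ∀ ν, ν ∉ T → ν ∉ Iinf := fun ν hν hmem => hν (hT0 (Finset.mem_coe.mp (hS₀ hmem)))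
  have hfT : ∀ ν, ν ∉ T → f ν = Set.indicator (H ν : Set (G ν)) fun _ => (1 : ℂ) := by
    intro ν hν
    by_contra hc
    exact hν (Finset.mem_union_left _ (Finset.mem_union_right _ (hfchar'.mem_toFinset.mpr hc)))
  have hχT : ∀ ν, ν ∉ T → ∀ h ∈ H ν, χl ν h = 1 := by
    intro ν hν
    by_contra hc
    exact hν (Finset.mem_union_right _ (hχtriv'.mem_toFinset.mpr hc))
  have hHoT : ∀ ν, ν ∉ T → IsOpen (H ν : Set (G ν)) := fun ν hν => hHopen ν (hTIinf ν hν)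
  have hHmT : ∀ ν, ν ∉ T → MeasurableSet (H ν : Set (G ν)) :=
    fun ν hν => (hHoT ν hν).measurableSet
  have hμH1 : ∀ ν, ν ∉ T → μ ν (H ν : Set (G ν)) = 1 :=
    fun ν hν => hnorm ν (fun h => hν (hT0 h))
  -- continuity and measurability of the evaluation maps
  have evalCont : ∀ ν, Continuous fun g : RestrictedDirectProduct G H => g.toPi ν := by
    intro ν
    let e : RestrictedDirectProduct G H →* G ν :=
      { toFun := fun g => g.toPi ν, map_one' := rfl, map_mul' := fun x y => rfl }
    have he : Continuous e := by
      apply continuous_of_continuousAt_one e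
      have h1 : e (1 : RestrictedDirectProduct G H) = 1 := rfl
      rw [ContinuousAt, h1]
      rw [hbasis.tendsto_iff (nhds_basis_opens (1 : G ν))]
      rintro N ⟨hN1, hNo⟩
      refine ⟨Function.update (fun μ' => if μ' ∈ Iinf then Set.univ else
        (H μ' : Set (G μ'))) ν N, ⟨?_, ?_⟩, ?_⟩
      · intro μ'
        rcases eq_or_ne μ' ν with rfl | hne
        · rw [Function.update_self]; exact ⟨hNo, hN1⟩
        · rw [Function.update_of_ne hne]
          split_ifs with h
          · exact ⟨isOpen_univ, trivial⟩
          · exact ⟨hHopen μ' h, (H μ').one_mem⟩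
      · apply Filter.eventually_cofinite.mpr
        apply Set.Finite.subset (hIinf.insert ν)
        intro μ' hμ'
        by_contra hc
        simp only [Set.mem_insert_iff, not_or] at hc
        obtain ⟨h1', h2'⟩ := hc
        apply hμ'
        rw [Function.update_of_ne h1', if_neg h2']
      · intro x hx
        have := hx ν
        rwa [Function.update_self] at this
    exact he
  have evalMeas : ∀ ν, Measurable fun g : RestrictedDirectProduct G H => g.toPi ν :=
    fun ν => (evalCont ν).measurable
  -- the open set U
  set U : Set (RestrictedDirectProduct G H) := {g | ∀ ν, ν ∉ T → g.toPi ν ∈ H ν} with hUdef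
  have hUopen : IsOpen U := by
    rw [isOpen_iff_mem_nhds]
    intro g hg
    have hK : {x : RestrictedDirectProduct G H |
        ∀ ν, x.toPi ν ∈ (fun ν' => if ν' ∈ T then Set.univ else (H ν' : Set (G ν'))) ν}
        ∈ 𝓝 (1 : RestrictedDirectProduct G H) := by
      apply hbasis.mem_of_mem
      constructor
      · intro ν
        by_cases h : ν ∈ T
        · simp only [if_pos h]; exact ⟨isOpen_univ, trivial⟩
        · simp only [if_neg h]; exact ⟨hHoT ν h, (H ν).one_mem⟩
      · apply Filter.eventually_cofinite.mpr
        apply Set.Finite.subset T.finite_toSet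
        intro ν hν
        by_contra hc
        exact hν (if_neg hc)
    rw [← map_mul_left_nhds_one g, Filter.mem_map]
    apply Filter.mem_of_superset hK
    intro k hk
    intro ν hν
    have h2 : k.toPi ν ∈ H ν := by
      have := hk ν
      simp only [if_neg hν] at this
      exact this
    exact (H ν).mul_mem (hg ν hν) h2
  have hUmeas : MeasurableSet U := hUopen.measurableSet
  -- the key lintegral product formula
  have key : ∀ ψ : ∀ ν, G ν → ℝ≥0∞, (∀ ν ∈ T, Measurable (ψ ν)) →
      ∫⁻ g, U.indicator (fun g' => ∏ ν ∈ T, ψ ν (g'.toPi ν)) g ∂μG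
        = ∏ ν ∈ T, ∫⁻ x, ψ ν x ∂μ ν := by
    suffices hsuf : ∀ V : Finset I, ∀ ψ : ∀ ν, G ν → ℝ≥0∞, (∀ ν ∈ T, Measurable (ψ ν)) →
        (∀ ν, ν ∈ T → ν ∉ V →
          ∃ c, ∃ A : Set (G ν), MeasurableSet A ∧ ψ ν = A.indicator fun _ => c) →
        ∫⁻ g, U.indicator (fun g' => ∏ ν ∈ T, ψ ν (g'.toPi ν)) g ∂μG
          = ∏ ν ∈ T, ∫⁻ x, ψ ν x ∂μ ν by
      intro ψ hm
      exact hsuf T ψ hm (fun ν hν hν' => absurd hν hν')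
    intro V
    induction V using Finset.induction_on with
    | empty =>
      intro ψ hm hconf
      have hconf' : ∀ ν, ∃ c, ∃ A : Set (G ν), MeasurableSet A ∧
          (ν ∈ T → ψ ν = A.indicator fun _ => c) := by
        intro ν
        by_cases hν : ν ∈ T
        · obtain ⟨c, A, hA, he⟩ := hconf ν hν (Finset.notMem_empty ν)
          exact ⟨c, A, hA, fun _ => he⟩
        · exact ⟨0, ∅, MeasurableSet.empty, fun h => absurd h hν⟩
      choose c A hA hψA using hconf'
      have hAAm : ∀ ν, MeasurableSet (if ν ∈ T then A ν else (H ν : Set (G ν))) := by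
        intro ν
        by_cases hν : ν ∈ T
        · simpa [hν] using hA ν
        · simpa [hν] using hHmT ν hν
      have hrecteq : {x : RestrictedDirectProduct G H |
            ∀ ν, x.toPi ν ∈ (if ν ∈ T then A ν else (H ν : Set (G ν)))}
          = U ∩ ⋂ ν ∈ T, (fun g : RestrictedDirectProduct G H => g.toPi ν) ⁻¹' A ν := by
        ext x
        simp only [Set.mem_setOf_eq, Set.mem_inter_iff, Set.mem_iInter, Set.mem_preimage,
          hUdef]
        constructor
        · intro h
          refine ⟨fun ν hν => ?_, fun ν hν => ?_⟩
          · have := h ν; rwa [if_neg hν] at this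
          · have := h ν; rwa [if_pos hν] at this
        · rintro ⟨h1, h2⟩ ν
          by_cases hν : ν ∈ T
          · rw [if_pos hν]; exact h2 ν hν
          · rw [if_neg hν]; exact h1 ν hν
      have hrectm : MeasurableSet {x : RestrictedDirectProduct G H |
          ∀ ν, x.toPi ν ∈ (if ν ∈ T then A ν else (H ν : Set (G ν)))} := by
        rw [hrecteq]
        exact hUmeas.inter
          (MeasurableSet.biInter T.countable_toSet fun ν hν => evalMeas ν (hA ν))
      have hrectμ : μG {x : RestrictedDirectProduct G H |
            ∀ ν, x.toPi ν ∈ (if ν ∈ T then A ν else (H ν : Set (G ν)))}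
          = ∏ ν ∈ T, μ ν (A ν) := by
        rw [hμGprod T hT0 _ hAAm (fun ν hν => by simp [hν])]
        exact Finset.prod_congr rfl fun ν hν => by simp [hν]
      have hpt : ∀ g, U.indicator (fun g' => ∏ ν ∈ T, ψ ν (g'.toPi ν)) g
          = Set.indicator {x : RestrictedDirectProduct G H |
              ∀ ν, x.toPi ν ∈ (if ν ∈ T then A ν else (H ν : Set (G ν)))}
              (fun _ => ∏ ν ∈ T, c ν) g := by
        intro g
        by_cases hgU : g ∈ U
        · by_cases hgA : ∀ ν ∈ T, g.toPi ν ∈ A ν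
          · have hmem : g ∈ {x : RestrictedDirectProduct G H |
                ∀ ν, x.toPi ν ∈ (if ν ∈ T then A ν else (H ν : Set (G ν)))} := by
              intro ν
              by_cases hν : ν ∈ T
              · rw [if_pos hν]; exact hgA ν hν
              · rw [if_neg hν]; exact hgU ν hν
            rw [Set.indicator_of_mem hgU, Set.indicator_of_mem hmem]
            exact Finset.prod_congr rfl fun ν hν => by
              rw [hψA ν hν, Set.indicator_of_mem (hgA ν hν)]
          · push_neg at hgA
            obtain ⟨ν₁, hν₁T, hν₁⟩ := hgA
            have hnm : g ∉ {x : RestrictedDirectProduct G H |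
                ∀ ν, x.toPi ν ∈ (if ν ∈ T then A ν else (H ν : Set (G ν)))} := by
              intro hmem
              have := hmem ν₁
              rw [if_pos hν₁T] at this
              exact hν₁ this
            rw [Set.indicator_of_mem hgU, Set.indicator_of_notMem hnm]
            exact Finset.prod_eq_zero hν₁T
              (by rw [hψA ν₁ hν₁T, Set.indicator_of_notMem hν₁])
        · have hnm : g ∉ {x : RestrictedDirectProduct G H |
              ∀ ν, x.toPi ν ∈ (if ν ∈ T then A ν else (H ν : Set (G ν)))} := by
            intro hmem
            apply hgU
            intro ν hν
            have := hmem ν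
            rwa [if_neg hν] at this
          rw [Set.indicator_of_notMem hgU, Set.indicator_of_notMem hnm]
      calc ∫⁻ g, U.indicator (fun g' => ∏ ν ∈ T, ψ ν (g'.toPi ν)) g ∂μG
          = ∫⁻ g, Set.indicator {x : RestrictedDirectProduct G H |
              ∀ ν, x.toPi ν ∈ (if ν ∈ T then A ν else (H ν : Set (G ν)))}
              (fun _ => ∏ ν ∈ T, c ν) g ∂μG := lintegral_congr hpt
        _ = (∏ ν ∈ T, c ν) * μG {x : RestrictedDirectProduct G H |
              ∀ ν, x.toPi ν ∈ (if ν ∈ T then A ν else (H ν : Set (G ν)))} :=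
            lintegral_indicator_const hrectm _
        _ = ∏ ν ∈ T, c ν * μ ν (A ν) := by rw [hrectμ, Finset.prod_mul_distrib]
        _ = ∏ ν ∈ T, ∫⁻ x, ψ ν x ∂μ ν := Finset.prod_congr rfl fun ν hν => by
              rw [hψA ν hν, lintegral_indicator_const (hA ν)]
    | @insert ν₀ V hν₀V ih =>
      intro ψ hm hconf
      by_cases hν₀T : ν₀ ∈ T
      · have rest_meas : Measurable fun g : RestrictedDirectProduct G H =>
            ∏ ν ∈ T.erase ν₀, ψ ν (g.toPi ν) :=
          Finset.measurable_prod _ fun ν hν =>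
            (hm ν (Finset.mem_of_mem_erase hν)).comp (evalMeas ν)
        have slot : ∀ φ₀ : G ν₀ → ℝ≥0∞, Measurable φ₀ →
            ∫⁻ g, U.indicator
                (fun g' => φ₀ (g'.toPi ν₀) * ∏ ν ∈ T.erase ν₀, ψ ν (g'.toPi ν)) g ∂μG
              = (∫⁻ x, φ₀ x ∂μ ν₀) * ∏ ν ∈ T.erase ν₀, ∫⁻ x, ψ ν x ∂μ ν := by
          have slotS : ∀ s : SimpleFunc (G ν₀) ℝ≥0∞,
              ∫⁻ g, U.indicator
                  (fun g' => s (g'.toPi ν₀) * ∏ ν ∈ T.erase ν₀, ψ ν (g'.toPi ν)) g ∂μG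
                = (∫⁻ x, s x ∂μ ν₀) * ∏ ν ∈ T.erase ν₀, ∫⁻ x, ψ ν x ∂μ ν := by
            intro s
            induction s using SimpleFunc.induction with
            | @const cst B hB =>
              have hcoe : ∀ x, (SimpleFunc.piecewise B hB (SimpleFunc.const _ cst)
                  (SimpleFunc.const _ (0 : ℝ≥0∞))) x = B.indicator (fun _ => cst) x := by
                intro x
                simp only [SimpleFunc.coe_piecewise, SimpleFunc.coe_const, SimpleFunc.coe_zero,
                  Set.piecewise_eq_indicator]
                rfl
              have hm' : ∀ ν ∈ T, Measurable
                  ((Function.update ψ ν₀ (B.indicator fun _ => cst)) ν) := by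
                intro ν hν
                rcases eq_or_ne ν ν₀ with rfl | hne
                · rw [Function.update_self]
                  exact measurable_const.indicator hB
                · rw [Function.update_of_ne hne]
                  exact hm ν hν
              have hconf' : ∀ ν, ν ∈ T → ν ∉ V →
                  ∃ c, ∃ A : Set (G ν), MeasurableSet A ∧
                    (Function.update ψ ν₀ (B.indicator fun _ => cst)) ν
                      = A.indicator fun _ => c := by
                intro ν hνT hνV
                rcases eq_or_ne ν ν₀ with rfl | hne
                · exact ⟨cst, B, hB, Function.update_self _ _ _⟩
                · rw [Function.update_of_ne hne]
                  exact hconf ν hνT (fun hmem => by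
                    rcases Finset.mem_insert.mp hmem with h | h
                    · exact hne h
                    · exact hνV h)
              have happ := ih (Function.update ψ ν₀ (B.indicator fun _ => cst)) hm' hconf'
              have hLHS : ∀ g : RestrictedDirectProduct G H,
                  ∏ ν ∈ T, (Function.update ψ ν₀ (B.indicator fun _ => cst)) ν (g.toPi ν)
                    = B.indicator (fun _ => cst) (g.toPi ν₀)
                        * ∏ ν ∈ T.erase ν₀, ψ ν (g.toPi ν) := by
                intro g
                rw [← Finset.mul_prod_erase T _ hν₀T, Function.update_self]
                congr 1
                exact Finset.prod_congr rfl fun ν hν => by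
                  rw [Function.update_of_ne (Finset.ne_of_mem_erase hν)]
              calc ∫⁻ g, U.indicator (fun g' =>
                    (SimpleFunc.piecewise B hB (SimpleFunc.const _ cst)
                      (SimpleFunc.const _ (0 : ℝ≥0∞))) (g'.toPi ν₀)
                      * ∏ ν ∈ T.erase ν₀, ψ ν (g'.toPi ν)) g ∂μG
                  = ∫⁻ g, U.indicator (fun g' => ∏ ν ∈ T,
                      (Function.update ψ ν₀ (B.indicator fun _ => cst)) ν (g'.toPi ν)) g ∂μG := by
                    apply lintegral_congr
                    intro g
                    by_cases hg : g ∈ U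
                    · rw [Set.indicator_of_mem hg, Set.indicator_of_mem hg, hLHS g, hcoe]
                    · rw [Set.indicator_of_notMem hg, Set.indicator_of_notMem hg]
                _ = ∏ ν ∈ T, ∫⁻ x, (Function.update ψ ν₀ (B.indicator fun _ => cst)) ν x ∂μ ν :=
                    happ
                _ = (∫⁻ x, (SimpleFunc.piecewise B hB (SimpleFunc.const _ cst)
                      (SimpleFunc.const _ (0 : ℝ≥0∞))) x ∂μ ν₀)
                      * ∏ ν ∈ T.erase ν₀, ∫⁻ x, ψ ν x ∂μ ν := by
                    rw [← Finset.mul_prod_erase T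
                      (fun ν => ∫⁻ x, (Function.update ψ ν₀ (B.indicator fun _ => cst)) ν x ∂μ ν)
                      hν₀T]
                    have h1 : (∫⁻ x, (Function.update ψ ν₀ (B.indicator fun _ => cst)) ν₀ x ∂μ ν₀)
                        = ∫⁻ x, (SimpleFunc.piecewise B hB (SimpleFunc.const _ cst)
                            (SimpleFunc.const _ (0 : ℝ≥0∞))) x ∂μ ν₀ := by
                      rw [Function.update_self]
                      exact lintegral_congr fun x => (hcoe x).symm
                    rw [h1]
                    congr 1
                    exact Finset.prod_congr rfl fun ν hν => by
                      rw [Function.update_of_ne (Finset.ne_of_mem_erase hν)]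
            | @add s₁ s₂ hdisj ih₁ ih₂ =>
              have hm₁ : Measurable fun g : RestrictedDirectProduct G H =>
                  U.indicator (fun g' => s₁ (g'.toPi ν₀)
                    * ∏ ν ∈ T.erase ν₀, ψ ν (g'.toPi ν)) g :=
                ((s₁.measurable.comp (evalMeas ν₀)).mul rest_meas).indicator hUmeas
              calc ∫⁻ g, U.indicator (fun g' => (s₁ + s₂) (g'.toPi ν₀)
                    * ∏ ν ∈ T.erase ν₀, ψ ν (g'.toPi ν)) g ∂μG
                  = ∫⁻ g, (U.indicator (fun g' => s₁ (g'.toPi ν₀)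
                      * ∏ ν ∈ T.erase ν₀, ψ ν (g'.toPi ν)) g
                    + U.indicator (fun g' => s₂ (g'.toPi ν₀)
                      * ∏ ν ∈ T.erase ν₀, ψ ν (g'.toPi ν)) g) ∂μG := by
                    apply lintegral_congr
                    intro g
                    by_cases hg : g ∈ U
                    · simp only [Set.indicator_of_mem hg, SimpleFunc.coe_add, Pi.add_apply,
                        add_mul]
                    · simp only [Set.indicator_of_notMem hg, add_zero]
                _ = ∫⁻ g, U.indicator (fun g' => s₁ (g'.toPi ν₀)
                      * ∏ ν ∈ T.erase ν₀, ψ ν (g'.toPi ν)) g ∂μG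
                    + ∫⁻ g, U.indicator (fun g' => s₂ (g'.toPi ν₀)
                      * ∏ ν ∈ T.erase ν₀, ψ ν (g'.toPi ν)) g ∂μG :=
                    lintegral_add_left hm₁ _
                _ = (∫⁻ x, (s₁ + s₂) x ∂μ ν₀) * ∏ ν ∈ T.erase ν₀, ∫⁻ x, ψ ν x ∂μ ν := by
                    rw [ih₁, ih₂, ← add_mul]
                    congr 1
                    rw [← lintegral_add_left s₁.measurable]
                    apply lintegral_congr
                    intro x
                    simp [SimpleFunc.coe_add]
          intro φ₀ hφ₀
          calc ∫⁻ g, U.indicator (fun g' => φ₀ (g'.toPi ν₀)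
                * ∏ ν ∈ T.erase ν₀, ψ ν (g'.toPi ν)) g ∂μG
              = ∫⁻ g, ⨆ n, U.indicator (fun g' => (SimpleFunc.eapprox φ₀ n) (g'.toPi ν₀)
                  * ∏ ν ∈ T.erase ν₀, ψ ν (g'.toPi ν)) g ∂μG := by
                apply lintegral_congr
                intro g
                by_cases hg : g ∈ U
                · simp only [Set.indicator_of_mem hg]
                  rw [← SimpleFunc.iSup_eapprox_apply hφ₀, ENNReal.iSup_mul]
                · simp only [Set.indicator_of_notMem hg]
                  simp
            _ = ⨆ n, ∫⁻ g, U.indicator (fun g' => (SimpleFunc.eapprox φ₀ n) (g'.toPi ν₀)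
                  * ∏ ν ∈ T.erase ν₀, ψ ν (g'.toPi ν)) g ∂μG := by
                apply lintegral_iSup
                · intro n
                  exact (((SimpleFunc.eapprox φ₀ n).measurable.comp (evalMeas ν₀)).mul
                    rest_meas).indicator hUmeas
                · intro m n hmn g
                  by_cases hg : g ∈ U
                  · simp only [Set.indicator_of_mem hg]
                    exact mul_le_mul_left (SimpleFunc.monotone_eapprox φ₀ hmn _) _
                  · simp only [Set.indicator_of_notMem hg, le_refl]
            _ = ⨆ n, (∫⁻ x, (SimpleFunc.eapprox φ₀ n) x ∂μ ν₀)
                  * ∏ ν ∈ T.erase ν₀, ∫⁻ x, ψ ν x ∂μ ν := by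
                exact iSup_congr fun n => slotS _
            _ = (⨆ n, ∫⁻ x, (SimpleFunc.eapprox φ₀ n) x ∂μ ν₀)
                  * ∏ ν ∈ T.erase ν₀, ∫⁻ x, ψ ν x ∂μ ν := (ENNReal.iSup_mul _ _).symm
            _ = (∫⁻ x, φ₀ x ∂μ ν₀) * ∏ ν ∈ T.erase ν₀, ∫⁻ x, ψ ν x ∂μ ν := by
                congr 1
                rw [← lintegral_iSup (fun n => (SimpleFunc.eapprox φ₀ n).measurable)
                  (fun m n hmn x => SimpleFunc.monotone_eapprox φ₀ hmn x)]
                exact lintegral_congr fun x => SimpleFunc.iSup_eapprox_apply hφ₀ x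
        calc ∫⁻ g, U.indicator (fun g' => ∏ ν ∈ T, ψ ν (g'.toPi ν)) g ∂μG
            = ∫⁻ g, U.indicator (fun g' => ψ ν₀ (g'.toPi ν₀)
                * ∏ ν ∈ T.erase ν₀, ψ ν (g'.toPi ν)) g ∂μG := by
              apply lintegral_congr
              intro g
              by_cases hg : g ∈ U
              · rw [Set.indicator_of_mem hg, Set.indicator_of_mem hg]
                exact (Finset.mul_prod_erase T (fun ν => ψ ν (g.toPi ν)) hν₀T).symm
              · rw [Set.indicator_of_notMem hg, Set.indicator_of_notMem hg]
          _ = (∫⁻ x, ψ ν₀ x ∂μ ν₀) * ∏ ν ∈ T.erase ν₀, ∫⁻ x, ψ ν x ∂μ ν :=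
              slot (ψ ν₀) (hm ν₀ hν₀T)
          _ = ∏ ν ∈ T, ∫⁻ x, ψ ν x ∂μ ν :=
              Finset.mul_prod_erase T (fun ν => ∫⁻ x, ψ ν x ∂μ ν) hν₀T
      · exact ih ψ hm fun ν hνT hνV => hconf ν hνT (fun hmem => by
          rcases Finset.mem_insert.mp hmem with h | h
          · exact hν₀T (h ▸ hνT)
          · exact hνV h)
  -- strong measurability helper
  have smP : ∀ (w : ∀ ν, G ν → ℂ), (∀ ν ∈ T, Continuous (w ν)) →
      MeasureTheory.StronglyMeasurable
        fun g : RestrictedDirectProduct G H =>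
          U.indicator (fun g' => ∏ ν ∈ T, w ν (g'.toPi ν)) g :=
    fun w hw =>
      ((continuous_finset_prod T fun ν hν => (hw ν hν).comp (evalCont ν)).stronglyMeasurable).indicator
        hUmeas
  -- domination helper
  have hDom : ∀ (w : ∀ ν, G ν → ℂ), (∀ ν ∈ T, Continuous (w ν)) →
      (∀ ν ∈ T, Integrable (w ν) (μ ν)) →
      Integrable (fun g => U.indicator (fun g' => ∏ ν ∈ T, ‖w ν (g'.toPi ν)‖) g) μG := by
    intro w hwc hwi
    constructor
    · exact (((continuous_finset_prod T fun ν hν =>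
        ((hwc ν hν).norm).comp (evalCont ν)).stronglyMeasurable).indicator
          hUmeas).aestronglyMeasurable
    · rw [hasFiniteIntegral_def]
      simp only [enorm_eq_nnnorm]
      have heq : (fun g : RestrictedDirectProduct G H =>
            (‖U.indicator (fun g' => ∏ ν ∈ T, ‖w ν (g'.toPi ν)‖) g‖₊ : ℝ≥0∞))
          = fun g => U.indicator (fun g' => ∏ ν ∈ T, (‖w ν (g'.toPi ν)‖₊ : ℝ≥0∞)) g := by
        funext g
        by_cases hg : g ∈ U
        · rw [Set.indicator_of_mem hg, Set.indicator_of_mem hg, ← ENNReal.coe_finset_prod]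
          norm_cast
          rw [nnnorm_prod]
          exact Finset.prod_congr rfl fun ν _ => nnnorm_norm _
        · rw [Set.indicator_of_notMem hg, Set.indicator_of_notMem hg]
          simp
      rw [heq, key (fun ν x => (‖w ν x‖₊ : ℝ≥0∞))
        (fun ν hν => (hwc ν hν).measurable.nnnorm.coe_nnreal_ennreal)]
      exact ENNReal.prod_lt_top fun ν hν => (hwi ν hν).2
  -- the complex product formula
  have keyC : ∀ w : ∀ ν, G ν → ℂ, (∀ ν ∈ T, Continuous (w ν)) →
      (∀ ν ∈ T, Integrable (w ν) (μ ν)) →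
      ∫ g, U.indicator (fun g' => ∏ ν ∈ T, w ν (g'.toPi ν)) g ∂μG
        = ∏ ν ∈ T, ∫ x, w ν x ∂μ ν := by
    suffices hsuf : ∀ V : Finset I, ∀ w : ∀ ν, G ν → ℂ, (∀ ν ∈ T, Continuous (w ν)) →
        (∀ ν ∈ T, Integrable (w ν) (μ ν)) →
        (∀ ν, ν ∈ T → ν ∉ V → ∀ x, w ν x = (((w ν x).re : ℝ) : ℂ) ∧ 0 ≤ (w ν x).re) →
        ∫ g, U.indicator (fun g' => ∏ ν ∈ T, w ν (g'.toPi ν)) g ∂μG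
          = ∏ ν ∈ T, ∫ x, w ν x ∂μ ν by
      intro w hc hi
      exact hsuf T w hc hi (fun ν hν hν' => absurd hν hν')
    intro V
    induction V using Finset.induction_on with
    | empty =>
      intro w hc hi hrep
      have hrep' : ∀ ν ∈ T, ∀ x, w ν x = (((w ν x).re : ℝ) : ℂ) ∧ 0 ≤ (w ν x).re :=
        fun ν hν => hrep ν hν (Finset.notMem_empty ν)
      have hptC : ∀ g : RestrictedDirectProduct G H,
          U.indicator (fun g' => ∏ ν ∈ T, w ν (g'.toPi ν)) g
            = ((U.indicator (fun g' => ∏ ν ∈ T, (w ν (g'.toPi ν)).re) g : ℝ) : ℂ) := by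
        intro g
        by_cases hg : g ∈ U
        · rw [Set.indicator_of_mem hg, Set.indicator_of_mem hg, Complex.ofReal_prod]
          exact Finset.prod_congr rfl fun ν hν => (hrep' ν hν _).1
        · rw [Set.indicator_of_notMem hg, Set.indicator_of_notMem hg]
          simp
      have hnn : 0 ≤ᵐ[μG] fun g : RestrictedDirectProduct G H =>
          U.indicator (fun g' => ∏ ν ∈ T, (w ν (g'.toPi ν)).re) g :=
        Filter.Eventually.of_forall fun g =>
          Set.indicator_nonneg
            (fun g' _ => Finset.prod_nonneg fun ν hν => (hrep' ν hν _).2) g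
      have hsm : AEStronglyMeasurable (fun g : RestrictedDirectProduct G H =>
          U.indicator (fun g' => ∏ ν ∈ T, (w ν (g'.toPi ν)).re) g) μG :=
        (((continuous_finset_prod T fun ν hν =>
          Complex.continuous_re.comp ((hc ν hν).comp (evalCont ν))).stronglyMeasurable).indicator
            hUmeas).aestronglyMeasurable
      have hlin : ∫⁻ g, ENNReal.ofReal
            (U.indicator (fun g' => ∏ ν ∈ T, (w ν (g'.toPi ν)).re) g) ∂μG
          = ∏ ν ∈ T, ∫⁻ x, ENNReal.ofReal ((w ν x).re) ∂μ ν := by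
        rw [← key (fun ν x => ENNReal.ofReal ((w ν x).re))
          (fun ν hν => ENNReal.measurable_ofReal.comp
            (Complex.measurable_re.comp (hc ν hν).measurable))]
        apply lintegral_congr
        intro g
        by_cases hg : g ∈ U
        · rw [Set.indicator_of_mem hg, Set.indicator_of_mem hg]
          exact ENNReal.ofReal_prod_of_nonneg fun ν hν => (hrep' ν hν _).2
        · rw [Set.indicator_of_notMem hg, Set.indicator_of_notMem hg]
          simp
      have hint : ∀ ν ∈ T, Integrable (fun x => (w ν x).re) (μ ν) := by
        intro ν hν
        simpa using (hi ν hν).re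
      have hfac : ∀ ν ∈ T, ∫⁻ x, ENNReal.ofReal ((w ν x).re) ∂μ ν
          = ENNReal.ofReal (∫ x, (w ν x).re ∂μ ν) := by
        intro ν hν
        exact (ofReal_integral_eq_lintegral_ofReal (hint ν hν)
          (Filter.Eventually.of_forall fun x => (hrep' ν hν x).2)).symm
      calc ∫ g, U.indicator (fun g' => ∏ ν ∈ T, w ν (g'.toPi ν)) g ∂μG
          = ∫ g, ((U.indicator (fun g' => ∏ ν ∈ T, (w ν (g'.toPi ν)).re) g : ℝ) : ℂ) ∂μG :=
            integral_congr_ae (Filter.Eventually.of_forall hptC)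
        _ = ((∫ g, U.indicator (fun g' => ∏ ν ∈ T, (w ν (g'.toPi ν)).re) g ∂μG : ℝ) : ℂ) :=
            integral_ofReal
        _ = ∏ ν ∈ T, ∫ x, w ν x ∂μ ν := by
            rw [integral_eq_lintegral_of_nonneg_ae hnn hsm, hlin]
            rw [Finset.prod_congr rfl hfac]
            rw [← ENNReal.ofReal_prod_of_nonneg
              (fun ν hν => integral_nonneg fun x => (hrep' ν hν x).2)]
            rw [ENNReal.toReal_ofReal
              (Finset.prod_nonneg fun ν hν => integral_nonneg fun x => (hrep' ν hν x).2)]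
            rw [Complex.ofReal_prod]
            exact Finset.prod_congr rfl fun ν hν => by
              have h1 : (∫ x, w ν x ∂μ ν) = ∫ x, (((w ν x).re : ℝ) : ℂ) ∂μ ν :=
                integral_congr_ae (Filter.Eventually.of_forall fun x => (hrep' ν hν x).1)
              rw [h1]
              exact (integral_ofReal).symm
    | @insert ν₀ V hν₀V ih =>
      intro w hc hi hrep
      by_cases hν₀T : ν₀ ∈ T
      · -- decomposition of the ν₀ factor into four nonnegative parts
        have hzc : Continuous (w ν₀) := hc ν₀ hν₀T
        have hzi : Integrable (w ν₀) (μ ν₀) := hi ν₀ hν₀T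
        -- the four nonnegative parts
        have piece : ∀ q : G ν₀ → ℝ, (∀ x, 0 ≤ q x) → Continuous q →
            Integrable q (μ ν₀) →
            ∫ g, U.indicator (fun g' => ((q (g'.toPi ν₀) : ℝ) : ℂ)
                * ∏ ν ∈ T.erase ν₀, w ν (g'.toPi ν)) g ∂μG
              = (∫ x, ((q x : ℝ) : ℂ) ∂μ ν₀) * ∏ ν ∈ T.erase ν₀, ∫ x, w ν x ∂μ ν := by
          intro q hq0 hqc hqi
          have hc' : ∀ ν ∈ T, Continuous
              ((Function.update w ν₀ fun x => ((q x : ℝ) : ℂ)) ν) := by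
            intro ν hν
            rcases eq_or_ne ν ν₀ with rfl | hne
            · rw [Function.update_self]
              exact Complex.continuous_ofReal.comp hqc
            · rw [Function.update_of_ne hne]; exact hc ν hν
          have hi' : ∀ ν ∈ T, Integrable
              ((Function.update w ν₀ fun x => ((q x : ℝ) : ℂ)) ν) (μ ν) := by
            intro ν hν
            rcases eq_or_ne ν ν₀ with rfl | hne
            · rw [Function.update_self]; exact hqi.ofReal
            · rw [Function.update_of_ne hne]; exact hi ν hν
          have hrep' : ∀ ν, ν ∈ T → ν ∉ V → ∀ x,
              (Function.update w ν₀ fun x => ((q x : ℝ) : ℂ)) ν x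
                = ((((Function.update w ν₀ fun x => ((q x : ℝ) : ℂ)) ν x).re : ℝ) : ℂ)
              ∧ 0 ≤ ((Function.update w ν₀ fun x => ((q x : ℝ) : ℂ)) ν x).re := by
            intro ν hνT hνV x
            rcases eq_or_ne ν ν₀ with rfl | hne
            · rw [Function.update_self]
              simp [hq0 x]
            · rw [Function.update_of_ne hne]
              exact hrep ν hνT (fun hmem => by
                rcases Finset.mem_insert.mp hmem with h | h
                · exact hne h
                · exact hνV h) x
          have happ := ih (Function.update w ν₀ fun x => ((q x : ℝ) : ℂ)) hc' hi' hrep'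
          have hLHS : ∀ g : RestrictedDirectProduct G H,
              ∏ ν ∈ T, (Function.update w ν₀ fun x => ((q x : ℝ) : ℂ)) ν (g.toPi ν)
                = ((q (g.toPi ν₀) : ℝ) : ℂ) * ∏ ν ∈ T.erase ν₀, w ν (g.toPi ν) := by
            intro g
            rw [← Finset.mul_prod_erase T
              (fun ν => (Function.update w ν₀ fun x => ((q x : ℝ) : ℂ)) ν (g.toPi ν)) hν₀T,
              Function.update_self]
            congr 1
            exact Finset.prod_congr rfl fun ν hν => by
              rw [Function.update_of_ne (Finset.ne_of_mem_erase hν)]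
          calc ∫ g, U.indicator (fun g' => ((q (g'.toPi ν₀) : ℝ) : ℂ)
                * ∏ ν ∈ T.erase ν₀, w ν (g'.toPi ν)) g ∂μG
              = ∫ g, U.indicator (fun g' => ∏ ν ∈ T,
                  (Function.update w ν₀ fun x => ((q x : ℝ) : ℂ)) ν (g'.toPi ν)) g ∂μG := by
                apply integral_congr_ae
                apply Filter.Eventually.of_forall
                intro g
                by_cases hg : g ∈ U
                · rw [Set.indicator_of_mem hg, Set.indicator_of_mem hg, hLHS g]
                · rw [Set.indicator_of_notMem hg, Set.indicator_of_notMem hg]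
            _ = ∏ ν ∈ T, ∫ x, (Function.update w ν₀ fun x => ((q x : ℝ) : ℂ)) ν x ∂μ ν := happ
            _ = (∫ x, ((q x : ℝ) : ℂ) ∂μ ν₀) * ∏ ν ∈ T.erase ν₀, ∫ x, w ν x ∂μ ν := by
                rw [← Finset.mul_prod_erase T
                  (fun ν => ∫ x, (Function.update w ν₀ fun x => ((q x : ℝ) : ℂ)) ν x ∂μ ν)
                  hν₀T, Function.update_self]
                congr 1
                exact Finset.prod_congr rfl fun ν hν => by
                  rw [Function.update_of_ne (Finset.ne_of_mem_erase hν)]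
        have hdec : ∀ x, w ν₀ x
            = (((max (w ν₀ x).re 0 : ℝ) : ℂ) - ((max (-(w ν₀ x).re) 0 : ℝ) : ℂ))
              + Complex.I * (((max (w ν₀ x).im 0 : ℝ) : ℂ) - ((max (-(w ν₀ x).im) 0 : ℝ) : ℂ)) := by
          intro x
          rw [← Complex.ofReal_sub, ← Complex.ofReal_sub,
            max_zero_sub_max_neg_zero_eq_self, max_zero_sub_max_neg_zero_eq_self, mul_comm]
          exact (Complex.re_add_im (w ν₀ x)).symm
        set p0 : G ν₀ → ℝ := fun x => max (w ν₀ x).re 0 with hp0def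
        set p1 : G ν₀ → ℝ := fun x => max (-(w ν₀ x).re) 0 with hp1def
        set p2 : G ν₀ → ℝ := fun x => max (w ν₀ x).im 0 with hp2def
        set p3 : G ν₀ → ℝ := fun x => max (-(w ν₀ x).im) 0 with hp3def
        have hc0 : Continuous p0 := (Complex.continuous_re.comp hzc).max continuous_const
        have hc1 : Continuous p1 := (Complex.continuous_re.comp hzc).neg.max continuous_const
        have hc2 : Continuous p2 := (Complex.continuous_im.comp hzc).max continuous_const
        have hc3 : Continuous p3 := (Complex.continuous_im.comp hzc).neg.max continuous_const
        have h00 : ∀ x, 0 ≤ p0 x := fun x => le_max_right _ _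
        have h01 : ∀ x, 0 ≤ p1 x := fun x => le_max_right _ _
        have h02 : ∀ x, 0 ≤ p2 x := fun x => le_max_right _ _
        have h03 : ∀ x, 0 ≤ p3 x := fun x => le_max_right _ _
        have hbnd : ∀ (a b : ℝ), |a| ≤ b → ‖max a 0‖ ≤ b := by
          intro a b h
          rw [Real.norm_eq_abs, abs_of_nonneg (le_max_right a 0)]
          exact le_trans (max_le (le_abs_self a) (abs_nonneg a)) h
        have hb0 : ∀ x, ‖p0 x‖ ≤ ‖w ν₀ x‖ := fun x => hbnd _ _
          (by exact Complex.abs_re_le_norm _)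
        have hb1 : ∀ x, ‖p1 x‖ ≤ ‖w ν₀ x‖ := fun x => hbnd _ _
          (by rw [abs_neg]; exact Complex.abs_re_le_norm _)
        have hb2 : ∀ x, ‖p2 x‖ ≤ ‖w ν₀ x‖ := fun x => hbnd _ _
          (by exact Complex.abs_im_le_norm _)
        have hb3 : ∀ x, ‖p3 x‖ ≤ ‖w ν₀ x‖ := fun x => hbnd _ _
          (by rw [abs_neg]; exact Complex.abs_im_le_norm _)
        have hqint : ∀ q : G ν₀ → ℝ, Continuous q → (∀ x, ‖q x‖ ≤ ‖w ν₀ x‖) →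
            Integrable q (μ ν₀) := by
          intro q hqc hqb
          exact Integrable.mono hzi.norm hqc.aestronglyMeasurable
            (Filter.Eventually.of_forall fun x => by rw [norm_norm]; exact hqb x)
        have hint0 : Integrable p0 (μ ν₀) := hqint p0 hc0 hb0
        have hint1 : Integrable p1 (μ ν₀) := hqint p1 hc1 hb1
        have hint2 : Integrable p2 (μ ν₀) := hqint p2 hc2 hb2
        have hint3 : Integrable p3 (μ ν₀) := hqint p3 hc3 hb3
        have hDint := hDom w hc hi
        have pieceInt : ∀ q : G ν₀ → ℝ, Continuous q → (∀ x, ‖q x‖ ≤ ‖w ν₀ x‖) →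
            Integrable (fun g => U.indicator (fun g' => ((q (g'.toPi ν₀) : ℝ) : ℂ)
              * ∏ ν ∈ T.erase ν₀, w ν (g'.toPi ν)) g) μG := by
          intro q hqc hqb
          apply Integrable.mono hDint
          · exact (((Complex.continuous_ofReal.comp (hqc.comp (evalCont ν₀))).mul
              (continuous_finset_prod _ fun ν hν =>
                (hc ν (Finset.mem_of_mem_erase hν)).comp
                  (evalCont ν))).stronglyMeasurable.indicator hUmeas).aestronglyMeasurable
          · apply Filter.Eventually.of_forall
            intro g
            by_cases hg : g ∈ U
            · rw [Set.indicator_of_mem hg, Set.indicator_of_mem hg]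
              have h1 : ‖((q (g.toPi ν₀) : ℝ) : ℂ) * ∏ ν ∈ T.erase ν₀, w ν (g.toPi ν)‖
                  ≤ ∏ ν ∈ T, ‖w ν (g.toPi ν)‖ := by
                rw [norm_mul, norm_prod,
                  ← Finset.mul_prod_erase T (fun ν => ‖w ν (g.toPi ν)‖) hν₀T]
                apply mul_le_mul_of_nonneg_right _
                  (Finset.prod_nonneg fun ν _ => norm_nonneg _)
                rw [Complex.norm_real]
                exact hqb _
              exact h1.trans ((le_abs_self _).trans_eq (Real.norm_eq_abs _).symm)
            · rw [Set.indicator_of_notMem hg, Set.indicator_of_notMem hg]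
              simp
        have hPI0 := pieceInt p0 hc0 hb0
        have hPI1 := pieceInt p1 hc1 hb1
        have hPI2 := pieceInt p2 hc2 hb2
        have hPI3 := pieceInt p3 hc3 hb3
        have hsplit : ∀ g : RestrictedDirectProduct G H,
            U.indicator (fun g' => ∏ ν ∈ T, w ν (g'.toPi ν)) g
              = (U.indicator (fun g' => (((p0 (g'.toPi ν₀) : ℝ) : ℂ) * ∏ ν ∈ T.erase ν₀, w ν (g'.toPi ν))) g - U.indicator (fun g' => (((p1 (g'.toPi ν₀) : ℝ) : ℂ) * ∏ ν ∈ T.erase ν₀, w ν (g'.toPi ν))) g)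
                + Complex.I * (U.indicator (fun g' => (((p2 (g'.toPi ν₀) : ℝ) : ℂ) * ∏ ν ∈ T.erase ν₀, w ν (g'.toPi ν))) g - U.indicator (fun g' => (((p3 (g'.toPi ν₀) : ℝ) : ℂ) * ∏ ν ∈ T.erase ν₀, w ν (g'.toPi ν))) g) := by
          intro g
          by_cases hg : g ∈ U
          · simp only [Set.indicator_of_mem hg]
            rw [← Finset.mul_prod_erase T (fun ν => w ν (g.toPi ν)) hν₀T,
              hdec (g.toPi ν₀)]
            ring
          · simp only [Set.indicator_of_notMem hg]
            ring
        have hqintC : ∀ q : G ν₀ → ℝ, Continuous q → (∀ x, ‖q x‖ ≤ ‖w ν₀ x‖) →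
            Integrable (fun x => ((q x : ℝ) : ℂ)) (μ ν₀) := by
          intro q hqc hqb
          refine Integrable.mono hzi.norm
            ((Complex.continuous_ofReal.comp hqc).aestronglyMeasurable)
            (Filter.Eventually.of_forall fun x => ?_)
          rw [norm_norm, Complex.norm_real]
          exact hqb x
        have hintC0 := hqintC p0 hc0 hb0
        have hintC1 := hqintC p1 hc1 hb1
        have hintC2 := hqintC p2 hc2 hb2
        have hintC3 := hqintC p3 hc3 hb3
        have hIz : ∫ x, w ν₀ x ∂μ ν₀
            = ((∫ x, ((p0 x : ℝ) : ℂ) ∂μ ν₀) - ∫ x, ((p1 x : ℝ) : ℂ) ∂μ ν₀)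
              + Complex.I * ((∫ x, ((p2 x : ℝ) : ℂ) ∂μ ν₀) - ∫ x, ((p3 x : ℝ) : ℂ) ∂μ ν₀) := by
          have hA : Integrable (fun x => ((p0 x : ℝ) : ℂ) - ((p1 x : ℝ) : ℂ)) (μ ν₀) :=
            hintC0.sub hintC1
          have hB : Integrable (fun x =>
              Complex.I * (((p2 x : ℝ) : ℂ) - ((p3 x : ℝ) : ℂ))) (μ ν₀) :=
            (hintC2.sub hintC3).const_mul Complex.I
          have h1 : ∫ x, w ν₀ x ∂μ ν₀
              = ∫ x, ((((p0 x : ℝ) : ℂ) - ((p1 x : ℝ) : ℂ))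
                + Complex.I * (((p2 x : ℝ) : ℂ) - ((p3 x : ℝ) : ℂ))) ∂μ ν₀ :=
            integral_congr_ae (Filter.Eventually.of_forall fun x => hdec x)
          rw [h1, integral_add hA hB, integral_sub hintC0 hintC1, integral_const_mul,
            integral_sub hintC2 hintC3]
        calc ∫ g, U.indicator (fun g' => ∏ ν ∈ T, w ν (g'.toPi ν)) g ∂μG
            = ∫ g, ((U.indicator (fun g' => (((p0 (g'.toPi ν₀) : ℝ) : ℂ) * ∏ ν ∈ T.erase ν₀, w ν (g'.toPi ν))) g - U.indicator (fun g' => (((p1 (g'.toPi ν₀) : ℝ) : ℂ) * ∏ ν ∈ T.erase ν₀, w ν (g'.toPi ν))) g)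
                + Complex.I * (U.indicator (fun g' => (((p2 (g'.toPi ν₀) : ℝ) : ℂ) * ∏ ν ∈ T.erase ν₀, w ν (g'.toPi ν))) g - U.indicator (fun g' => (((p3 (g'.toPi ν₀) : ℝ) : ℂ) * ∏ ν ∈ T.erase ν₀, w ν (g'.toPi ν))) g)) ∂μG :=
              integral_congr_ae (Filter.Eventually.of_forall hsplit)
          _ = ((∫ g, U.indicator (fun g' => (((p0 (g'.toPi ν₀) : ℝ) : ℂ) * ∏ ν ∈ T.erase ν₀, w ν (g'.toPi ν))) g ∂μG) - ∫ g, U.indicator (fun g' => (((p1 (g'.toPi ν₀) : ℝ) : ℂ) * ∏ ν ∈ T.erase ν₀, w ν (g'.toPi ν))) g ∂μG)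
                + Complex.I * ((∫ g, U.indicator (fun g' => (((p2 (g'.toPi ν₀) : ℝ) : ℂ) * ∏ ν ∈ T.erase ν₀, w ν (g'.toPi ν))) g ∂μG) - ∫ g, U.indicator (fun g' => (((p3 (g'.toPi ν₀) : ℝ) : ℂ) * ∏ ν ∈ T.erase ν₀, w ν (g'.toPi ν))) g ∂μG) := by
              have hA : Integrable (fun g =>
                  U.indicator (fun g' => (((p0 (g'.toPi ν₀) : ℝ) : ℂ) * ∏ ν ∈ T.erase ν₀, w ν (g'.toPi ν))) g - U.indicator (fun g' => (((p1 (g'.toPi ν₀) : ℝ) : ℂ) * ∏ ν ∈ T.erase ν₀, w ν (g'.toPi ν))) g) μG := hPI0.sub hPI1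
              have hB : Integrable (fun g =>
                  Complex.I * (U.indicator (fun g' => (((p2 (g'.toPi ν₀) : ℝ) : ℂ) * ∏ ν ∈ T.erase ν₀, w ν (g'.toPi ν))) g - U.indicator (fun g' => (((p3 (g'.toPi ν₀) : ℝ) : ℂ) * ∏ ν ∈ T.erase ν₀, w ν (g'.toPi ν))) g)) μG :=
                (hPI2.sub hPI3).const_mul Complex.I
              rw [integral_add hA hB, integral_sub hPI0 hPI1, integral_const_mul,
                integral_sub hPI2 hPI3]
          _ = (((∫ x, ((p0 x : ℝ) : ℂ) ∂μ ν₀) - ∫ x, ((p1 x : ℝ) : ℂ) ∂μ ν₀)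
                + Complex.I * ((∫ x, ((p2 x : ℝ) : ℂ) ∂μ ν₀) - ∫ x, ((p3 x : ℝ) : ℂ) ∂μ ν₀))
                * ∏ ν ∈ T.erase ν₀, ∫ x, w ν x ∂μ ν := by
              rw [piece p0 h00 hc0 hint0, piece p1 h01 hc1 hint1, piece p2 h02 hc2 hint2,
                piece p3 h03 hc3 hint3]
              ring
          _ = (∫ x, w ν₀ x ∂μ ν₀) * ∏ ν ∈ T.erase ν₀, ∫ x, w ν x ∂μ ν := by rw [hIz]
          _ = ∏ ν ∈ T, ∫ x, w ν x ∂μ ν :=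
              Finset.mul_prod_erase T (fun ν => ∫ x, w ν x ∂μ ν) hν₀T
      · exact ih w hc hi fun ν hνT hνV => hrep ν hνT (fun hmem => by
          rcases Finset.mem_insert.mp hmem with h | h
          · exact hν₀T (h ▸ hνT)
          · exact hνV h)
  -- the local factors
  have hφc : ∀ ν, Continuous fun x => f ν x * conj (χl ν x) :=
    fun ν => (hfcont ν).mul (RCLike.continuous_conj.comp (hχcont ν))
  have hφi : ∀ ν, Integrable (fun x => f ν x * conj (χl ν x)) (μ ν) := by
    intro ν
    have h1 : Integrable (fun x => conj (χl ν x) * f ν x) (μ ν) :=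
      Integrable.bdd_mul (hfint ν)
        ((RCLike.continuous_conj.comp (hχcont ν)).aestronglyMeasurable)
        (Filter.Eventually.of_forall fun x => by rw [RCLike.norm_conj]; exact le_of_eq (hχunit ν x))
    exact h1.congr (Filter.Eventually.of_forall fun x => mul_comm _ _)
  have hloc : ∀ ν, ν ∉ T → (fun x => f ν x * conj (χl ν x))
      = Set.indicator (H ν : Set (G ν)) fun _ => (1 : ℂ) := by
    intro ν hν
    funext x
    by_cases hx : x ∈ (H ν : Set (G ν))
    · rw [Set.indicator_of_mem hx, hfT ν hν, Set.indicator_of_mem hx, hχT ν hν x hx]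
      simp
    · rw [Set.indicator_of_notMem hx, hfT ν hν, Set.indicator_of_notMem hx, zero_mul]
  have hloc1 : ∀ ν, ν ∉ T → ∫ x, f ν x * conj (χl ν x) ∂μ ν = 1 := by
    intro ν hν
    rw [hloc ν hν, integral_indicator_const (1 : ℂ) (hHmT ν hν), measureReal_def, hμH1 ν hν]
    simp
  constructor
  · apply Filter.eventually_cofinite.mpr
    apply Set.Finite.subset T.finite_toSet
    intro ν hν
    by_contra hc
    exact hν (hloc1 ν fun hmem => hc (Finset.mem_coe.mpr hmem))
  · have hmemfin : ∀ g : RestrictedDirectProduct G H, {ν | g.toPi ν ∉ H ν}.Finite := by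
      intro g
      have hg2 : ∀ᶠ ν in Filter.cofinite, g.toPi ν ∈ H ν := g.2
      exact Filter.eventually_cofinite.mp hg2
    have hptF : ∀ g : RestrictedDirectProduct G H, F g * conj (χ g)
        = U.indicator (fun g' => ∏ ν ∈ T,
            (f ν (g'.toPi ν) * conj (χl ν (g'.toPi ν)))) g := by
      intro g
      have hWsub : ∀ ν, ν ∉ T ∪ (hmemfin g).toFinset →
          g.toPi ν ∈ H ν ∧ f ν (g.toPi ν) = 1 ∧ χl ν (g.toPi ν) = 1 := by
        intro ν hν
        have hνT : ν ∉ T := fun h => hν (Finset.mem_union_left _ h)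
        have hνH : g.toPi ν ∈ H ν := by
          by_contra hcon
          exact hν (Finset.mem_union_right _ ((hmemfin g).mem_toFinset.mpr hcon))
        refine ⟨hνH, ?_, hχT ν hνT _ hνH⟩
        rw [hfT ν hνT, Set.indicator_of_mem hνH]
      have hFg : F g = ∏ ν ∈ T ∪ (hmemfin g).toFinset, f ν (g.toPi ν) := by
        rw [hF g]
        apply finprod_eq_prod_of_mulSupport_subset
        intro ν hν
        rw [Function.mem_mulSupport] at hν
        by_contra hc
        exact hν (hWsub ν fun h => hc (Finset.mem_coe.mpr h)).2.1
      have hχg : χ g = ∏ ν ∈ T ∪ (hmemfin g).toFinset, χl ν (g.toPi ν) := by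
        rw [hχ g]
        apply finprod_eq_prod_of_mulSupport_subset
        intro ν hν
        rw [Function.mem_mulSupport] at hν
        by_contra hc
        exact hν (hWsub ν fun h => hc (Finset.mem_coe.mpr h)).2.2
      rw [hFg, hχg, map_prod (starRingEnd ℂ) _ (T ∪ (hmemfin g).toFinset),
        ← Finset.prod_mul_distrib]
      by_cases hgU : g ∈ U
      · rw [Set.indicator_of_mem hgU]
        refine (Finset.prod_subset Finset.subset_union_left ?_).symm
        intro ν hνW hνT
        have hνH : g.toPi ν ∈ H ν := hgU ν hνT
        rw [hfT ν hνT, Set.indicator_of_mem hνH, hχT ν hνT _ hνH]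
        simp
      · rw [Set.indicator_of_notMem hgU]
        have hex : ∃ ν, ν ∉ T ∧ g.toPi ν ∉ H ν := by
          by_contra hcon
          push_neg at hcon
          exact hgU fun ν hν => hcon ν hν
        obtain ⟨ν₁, hν₁T, hν₁H⟩ := hex
        apply Finset.prod_eq_zero
          (Finset.mem_union_right _ ((hmemfin g).mem_toFinset.mpr hν₁H))
        rw [hfT ν₁ hν₁T, Set.indicator_of_notMem hν₁H, zero_mul]
    calc ∫ g, F g * conj (χ g) ∂μG
        = ∫ g, U.indicator (fun g' => ∏ ν ∈ T,
            (f ν (g'.toPi ν) * conj (χl ν (g'.toPi ν)))) g ∂μG :=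
          integral_congr_ae (Filter.Eventually.of_forall hptF)
      _ = ∏ ν ∈ T, ∫ x, f ν x * conj (χl ν x) ∂μ ν :=
          keyC (fun ν x => f ν x * conj (χl ν x)) (fun ν _ => hφc ν) (fun ν _ => hφi ν)
      _ = ∏' ν, ∫ x, f ν x * conj (χl ν x) ∂μ ν :=
          (tprod_eq_prod fun ν hν => hloc1 ν hν).symm
end

section
/- Let f : A_K → ℂ be continuous and in L¹(A_K, μ), and suppose the periodization f̃(t) = ∑_{q∈K} f(t + q) converges absolutely for every t ∈ A_K and uniformly in t. Let F ⊆ A_K be a measurable fundamental domain for the translation action of K on A_K. Then for every γ ∈ K (diagonally embedded in A_K), the Fourier coefficient of the periodization equals the Fourier transform of f at γ: ∫_F f̃(t) ψ(tγ) dμ(t) = f̂(γ). -/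
/-!
STATEMENT 11: Let `f : A_K → ℂ` be continuous and in `L¹(A_K, μ)`, and suppose the
periodization `f̃(t) = ∑_{q∈K} f(t + q)` converges absolutely for every `t ∈ A_K` and
uniformly in `t`.  Let `F ⊆ A_K` be a measurable fundamental domain for the translation
action of `K` on `A_K`.  Then for every `γ ∈ K` (diagonally embedded in `A_K`), the Fourier
coefficient of the periodization equals the Fourier transform of `f` at `γ`:
`∫_F f̃(t) ψ(tγ) dμ(t) = f̂(γ)`.
-/

open NumberField MeasureTheory Filter Topology ComplexConjugate

noncomputable section

variable (K : Type*) [Field K] [NumberField K]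

/-- A nontrivial continuous unitary character of the additive group of the adele ring of `K`
that is trivial on the diagonally embedded `K`. -/
def IsAdelicCharacter (ψ : AddChar (NumberField.AdeleRing (𝓞 K) K) ℂ) : Prop :=
  Continuous ψ ∧ (∀ x, ‖ψ x‖ = 1) ∧ (∃ x, ψ x ≠ 1) ∧
    ∀ a : K, ψ (algebraMap K (NumberField.AdeleRing (𝓞 K) K) a) = 1

/-- The Haar measure on the adele ring, normalized so that a measurable fundamental domain
for the translation action of (the diagonally embedded) `K` on `A_K` has measure `1`. -/
def IsNormalizedAdelicHaar [MeasurableSpace (NumberField.AdeleRing (𝓞 K) K)]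
    (μ : Measure (NumberField.AdeleRing (𝓞 K) K)) : Prop :=
  μ.IsAddHaarMeasure ∧ ∃ F : Set (NumberField.AdeleRing (𝓞 K) K), MeasurableSet F ∧
    IsAddFundamentalDomain (NumberField.AdeleRing.principalSubgroup (𝓞 K) K) F μ ∧ μ F = 1

/-- The idelic norm, characterized as the factor by which multiplication by an idele scales
the (any) Haar measure `μ` on the adele ring: `μ(x·A) = |x| * μ(A)`. -/
def IsIdelicNorm [MeasurableSpace (NumberField.AdeleRing (𝓞 K) K)]
    (μ : Measure (NumberField.AdeleRing (𝓞 K) K)) (Nrm : (NumberField.AdeleRing (𝓞 K) K)ˣ →* ℝ) : Prop :=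
  (∀ x, 0 < Nrm x) ∧
    ∀ (x : (NumberField.AdeleRing (𝓞 K) K)ˣ) (A : Set (NumberField.AdeleRing (𝓞 K) K)), MeasurableSet A →
      μ ((fun a => (x : NumberField.AdeleRing (𝓞 K) K) * a) '' A) = ENNReal.ofReal (Nrm x) * μ A

/-- The adelic Fourier transform `f̂(y) = ∫ f(x) ψ(xy) dμ(x)` relative to the character `ψ`
and the (normalized) Haar measure `μ` on the adele ring. -/
def adelicFourier [MeasurableSpace (NumberField.AdeleRing (𝓞 K) K)]
    (μ : Measure (NumberField.AdeleRing (𝓞 K) K)) (ψ : AddChar (NumberField.AdeleRing (𝓞 K) K) ℂ)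
    (f : NumberField.AdeleRing (𝓞 K) K → ℂ) : NumberField.AdeleRing (𝓞 K) K → ℂ :=
  fun y => ∫ x, f x * ψ (x * y) ∂μ

theorem adelic_fourier_coefficient_of_periodization
    [MeasurableSpace (NumberField.AdeleRing (𝓞 K) K)] [BorelSpace (NumberField.AdeleRing (𝓞 K) K)]
    (μ : Measure (NumberField.AdeleRing (𝓞 K) K)) (hμ : IsNormalizedAdelicHaar K μ)
    (ψ : AddChar (NumberField.AdeleRing (𝓞 K) K) ℂ) (hψ : IsAdelicCharacter K ψ)
    (f : NumberField.AdeleRing (𝓞 K) K → ℂ) (hfcont : Continuous f) (hfint : Integrable f μ)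
    (habs : ∀ t : NumberField.AdeleRing (𝓞 K) K,
      Summable fun q : K => ‖f (t + algebraMap K (NumberField.AdeleRing (𝓞 K) K) q)‖)
    (hunif : ∃ g : NumberField.AdeleRing (𝓞 K) K → ℂ,
      TendstoUniformly (fun (s : Finset K) (t : NumberField.AdeleRing (𝓞 K) K) =>
        ∑ q ∈ s, f (t + algebraMap K (NumberField.AdeleRing (𝓞 K) K) q)) g Filter.atTop)
    (F : Set (NumberField.AdeleRing (𝓞 K) K)) (hFmeas : MeasurableSet F)
    (hFfund : IsAddFundamentalDomain (NumberField.AdeleRing.principalSubgroup (𝓞 K) K) F μ) :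
    ∀ γ : K,
      ∫ t in F, (∑' q : K, f (t + algebraMap K (NumberField.AdeleRing (𝓞 K) K) q)) *
          ψ (t * algebraMap K (NumberField.AdeleRing (𝓞 K) K) γ) ∂μ =
        adelicFourier K μ ψ f (algebraMap K (NumberField.AdeleRing (𝓞 K) K) γ) := by
  obtain ⟨hψcont, hψnorm, -, hψtriv⟩ := hψ
  intro γ
  haveI : Countable K := by
    have b := Module.finBasis ℚ K
    exact Countable.of_equiv _ b.equivFun.toEquiv.symm
  haveI : μ.IsAddHaarMeasure := hμ.1
  haveI : μ.IsAddLeftInvariant := inferInstance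
  set ι := algebraMap K (NumberField.AdeleRing (𝓞 K) K) with hι
  set γ' := ι γ with hγ'
  set g : NumberField.AdeleRing (𝓞 K) K → ℂ := fun x => f x * ψ (x * γ') with hg
  have hψc : Continuous fun x : NumberField.AdeleRing (𝓞 K) K => ψ (x * γ') :=
    hψcont.comp (continuous_mul_right γ')
  have hgcont : Continuous g := hfcont.mul hψc
  have hgint : Integrable g μ := by
    have h1 : Integrable (fun x => ψ (x * γ') * f x) μ :=
      hfint.bdd_mul (c := 1) hψc.aestronglyMeasurable (Filter.Eventually.of_forall fun x => le_of_eq (hψnorm _))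
    have : g = fun x => ψ (x * γ') * f x := by
      funext x; simp [hg, mul_comm]
    rw [this]; exact h1
  have hinj : Function.Injective ι := NumberField.AdeleRing.algebraMap_injective (𝓞 K) K
  let e : K ≃ NumberField.AdeleRing.principalSubgroup (𝓞 K) K :=
    Equiv.ofBijective (fun a => ⟨ι a, ⟨a, rfl⟩⟩)
      ⟨fun a b h => hinj (congrArg Subtype.val h), fun p => by
        obtain ⟨a, ha⟩ := p.2
        exact ⟨a, Subtype.ext ha⟩⟩
  haveI : Countable (NumberField.AdeleRing.principalSubgroup (𝓞 K) K) := Countable.of_equiv K e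
  have hvadd : ∀ (q : K) (t : NumberField.AdeleRing (𝓞 K) K), (e q) +ᵥ t = ι q + t := fun q t => rfl
  have hgq : ∀ (q : K) (t : NumberField.AdeleRing (𝓞 K) K),
      g (ι q + t) = f (t + ι q) * ψ (t * γ') := by
    intro q t
    have h0 : ι q + t = t + ι q := add_comm _ _
    have h1 : (t + ι q) * γ' = t * γ' + ι (q * γ) := by rw [map_mul]; ring
    rw [h0]
    simp only [hg, h1, AddChar.map_add_eq_mul, hψtriv (q * γ), mul_one]
  -- the key identity from the fundamental domain
  have key : ∫ x, g x ∂μ = ∑' q : K, ∫ t in F, f (t + ι q) * ψ (t * γ') ∂μ := by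
    rw [hFfund.integral_eq_tsum'' g hgint, ← e.tsum_eq]
    refine tsum_congr fun q => ?_
    refine setIntegral_congr_fun hFmeas fun t _ => ?_
    rw [hvadd, hgq]
  -- interchange of tsum and integral
  have hswap : ∫ t in F, (∑' q : K, f (t + ι q)) * ψ (t * γ') ∂μ
      = ∑' q : K, ∫ t in F, f (t + ι q) * ψ (t * γ') ∂μ := by
    have hrw : ∀ t, (∑' q : K, f (t + ι q)) * ψ (t * γ')
        = ∑' q : K, f (t + ι q) * ψ (t * γ') := fun t => (tsum_mul_right).symm
    simp_rw [hrw]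
    refine integral_tsum (fun q => ?_) ?_
    · exact ((hfcont.comp (continuous_add_right (ι q))).mul hψc).aestronglyMeasurable.restrict
    · have hnn : ∀ (q : K) (t : NumberField.AdeleRing (𝓞 K) K),
          (‖f (t + ι q) * ψ (t * γ')‖₊ : ENNReal) = ‖f (t + ι q)‖₊ := by
        intro q t
        have : ‖f (t + ι q) * ψ (t * γ')‖₊ = ‖f (t + ι q)‖₊ := by
          ext; simp [norm_mul, hψnorm]
        rw [this]
      have hsum : ∑' q : K, ∫⁻ t in F, (‖f (t + ι q) * ψ (t * γ')‖₊ : ENNReal) ∂μ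
          = ∫⁻ x, (‖f x‖₊ : ENNReal) ∂μ := by
        simp_rw [hnn]
        rw [hFfund.lintegral_eq_tsum'' (fun x => (‖f x‖₊ : ENNReal)), ← e.tsum_eq]
        refine tsum_congr fun q => ?_
        refine setLIntegral_congr_fun hFmeas fun t _ => ?_
        rw [hvadd, add_comm]
      simp only [enorm_eq_nnnorm]; rw [hsum]
      simpa only [enorm_eq_nnnorm] using hfint.2.ne
  rw [hswap, ← key]
  rfl
end
end
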